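/- arXiv:2307.04932 — 10 statements merged into one kernel-verified Lean document; each statement's English description precedes it below -/
import Mathlib

section
/- Let a, b, s, h be positive integers with r = a + b and s ≥ 2, let n ≥ s − 1, and let S ⊆ [n] with |S| = s − 1. Then the r-graph H = { e ⊆ [n] : |e| = r and e ∩ S ≠ ∅ } contains no bush B_{s,h}(a,b), and |H| = C(n,r) − C(n−s+1, r), where C(m,k) denotes the binomial coefficient. -/
/-!
Every edge meets `S`, and the petals `B i ∪ A i j₀` (for one fixed `j₀`) of a bush are `s`
pairwise disjoint edges, so they would need `s` distinct points of `S`, which has only `s - 1`.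
The edge count is by complement: the `r`-sets missing `S` are exactly the `r`-subsets of `[n] \ S`.
-/

/-- An `r`-graph `H` contains the bush `B_{s,h}(a,b)`. -/
def ContainsBush (a b s h : ℕ) (H : Finset (Finset ℕ)) : Prop :=
  ∃ (A : Finset ℕ) (B : Fin s → Finset ℕ) (P : Fin s → Fin h → Finset ℕ),
    A.card = a ∧ (∀ i, (B i).card = b) ∧ (∀ i j, (P i j).card = a) ∧
    (∀ i, Disjoint A (B i)) ∧ (∀ i j, Disjoint A (P i j)) ∧
    (∀ i i', i ≠ i' → Disjoint (B i) (B i')) ∧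
    (∀ i j i' j', (i, j) ≠ (i', j') → Disjoint (P i j) (P i' j')) ∧
    (∀ i i' j, Disjoint (B i) (P i' j)) ∧
    (∀ i, A ∪ B i ∈ H) ∧ (∀ i j, B i ∪ P i j ∈ H)

open Finset Function

theorem Finset.card_le_of_pairwise_disjoint_of_inter_nonempty {ι α : Type*} [Fintype ι]
    [DecidableEq α] {f : ι → Finset α} {S : Finset α} (hf : Pairwise (Disjoint on f))
    (hfS : ∀ i, (f i ∩ S).Nonempty) : Fintype.card ι ≤ S.card := by
  refine card_le_card_of_forall_subsingleton (fun i x => x ∈ f i) (fun i _ => ?_) fun x _ => ?_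
  · obtain ⟨x, hx⟩ := hfS i
    exact ⟨x, (mem_inter.mp hx).2, (mem_inter.mp hx).1⟩
  · rintro i ⟨-, hi⟩ i' ⟨-, hi'⟩
    by_contra hne
    exact disjoint_left.mp (hf hne) hi hi'

theorem ContainsBush.exists_pairwise_disjoint_edges {a b s h : ℕ} {H : Finset (Finset ℕ)}
    (hh : 0 < h) (hbush : ContainsBush a b s h H) :
    ∃ E : Fin s → Finset ℕ, Pairwise (Disjoint on E) ∧ ∀ i, E i ∈ H := by
  obtain ⟨-, B, P, -, -, -, -, -, hBB, hPP, hBP, -, hBPH⟩ := hbush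
  let j₀ : Fin h := ⟨0, hh⟩
  refine ⟨fun i => B i ∪ P i j₀, fun i i' hne => ?_, fun i => hBPH i j₀⟩
  simp only [Function.onFun, disjoint_union_left, disjoint_union_right]
  exact ⟨⟨hBB i i' hne, (hBP i' i j₀).symm⟩, hBP i i' j₀, hPP i j₀ i' j₀ (by simp [hne])⟩

theorem not_containsBush_of_forall_inter_nonempty {a b s h : ℕ} {H : Finset (Finset ℕ)}
    {S : Finset ℕ} (hh : 0 < h) (hS : S.card < s) (hH : ∀ e ∈ H, (e ∩ S).Nonempty) :
    ¬ ContainsBush a b s h H := by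
  intro hbush
  obtain ⟨E, hE, hEH⟩ := ContainsBush.exists_pairwise_disjoint_edges hh hbush
  have := card_le_of_pairwise_disjoint_of_inter_nonempty hE fun i => hH _ (hEH i)
  rw [Fintype.card_fin] at this
  omega

theorem Finset.filter_powersetCard_not_inter_nonempty {α : Type*} [DecidableEq α]
    (T S : Finset α) (r : ℕ) :
    (T.powersetCard r).filter (fun e => ¬ (e ∩ S).Nonempty) = (T \ S).powersetCard r := by
  ext e
  simp only [mem_filter, mem_powersetCard, subset_sdiff, not_nonempty_iff_eq_empty,
    ← disjoint_iff_inter_eq_empty]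
  tauto

theorem Finset.card_filter_powersetCard_inter_nonempty {α : Type*} [DecidableEq α]
    {T S : Finset α} (hS : S ⊆ T) (r : ℕ) :
    ((T.powersetCard r).filter fun e => (e ∩ S).Nonempty).card
      = T.card.choose r - (T.card - S.card).choose r := by
  have hsplit := card_filter_add_card_filter_not (s := T.powersetCard r)
    (fun e => (e ∩ S).Nonempty)
  rw [filter_powersetCard_not_inter_nonempty, card_powersetCard, card_powersetCard,
    card_sdiff_of_subset hS] at hsplit
  omega

theorem bush_free_construction_general (a b s h r n : ℕ) (hs : 2 ≤ s)
    (hh : 0 < h)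
    (S : Finset ℕ) (hS : S ⊆ Finset.Icc 1 n) (hScard : S.card = s - 1)
    (H : Finset (Finset ℕ))
    (hH : H = ((Finset.Icc 1 n).powersetCard r).filter fun e => (e ∩ S).Nonempty) :
    ¬ ContainsBush a b s h H ∧ H.card = n.choose r - (n + 1 - s).choose r := by
  subst hH
  refine ⟨not_containsBush_of_forall_inter_nonempty hh (by omega) fun e he => (mem_filter.mp he).2,
    ?_⟩
  rw [card_filter_powersetCard_inter_nonempty hS, Nat.card_Icc, hScard]
  congr 2
  omega

/-- The `r`-graph of all `r`-subsets of `[n]` meeting a fixed `(s-1)`-set `S` is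
bush-free and has exactly `C(n,r) - C(n-s+1,r)` edges. -/
theorem bush_free_construction (a b s h r n : ℕ) (ha : 0 < a) (hb : 0 < b) (hs : 2 ≤ s)
    (hh : 0 < h) (hr : r = a + b) (hn : s - 1 ≤ n)
    (S : Finset ℕ) (hS : S ⊆ Finset.Icc 1 n) (hScard : S.card = s - 1)
    (H : Finset (Finset ℕ))
    (hH : H = ((Finset.Icc 1 n).powersetCard r).filter fun e => (e ∩ S).Nonempty) :
    ¬ ContainsBush a b s h H ∧ H.card = n.choose r - (n + 1 - s).choose r :=
  bush_free_construction_general a b s h r n hs hh S hS hScard H hH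
end

section
/- Let r ≥ 3, s ≥ 2, n ≥ s − 1, and let A be a fixed (s−1)-element subset of [n]. Let E_1 = { e ⊆ [n] : |e| = r and |e ∩ A| = 1 }, and let E_2 be any family of r-element subsets of [n] \ A such that every (r−1)-element subset of [n] \ A is contained in at most one member of E_2. Then the r-graph E_1 ∪ E_2 contains no bush B_{s,2}(1, r−1). -/
open Finset Function

namespace Finset

variable {α : Type*} [DecidableEq α]

theorem card_le_card_of_pairwise_disjoint_inter_nonempty {ι : Type*} [Fintype ι]
    {S : ι → Finset α} {A : Finset α} (hS : Pairwise (Disjoint on S))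
    (hA : ∀ i, (S i ∩ A).Nonempty) : Fintype.card ι ≤ #A := by
  choose q hq using hA
  have hqS : ∀ i, q i ∈ S i := fun i => (mem_inter.1 (hq i)).1
  have hq_inj : Set.InjOn q (univ : Finset ι) := by
    intro i _ j _ hij
    by_contra hne
    exact disjoint_left.1 (hS hne) (hqS i) (hij ▸ hqS j)
  simpa using card_le_card_of_injOn q (fun i _ => (mem_inter.1 (hq i)).2) hq_inj

theorem union_ne_union_of_disjoint {B P Q : Finset α} (hP : P.Nonempty) (hBP : Disjoint B P)
    (hPQ : Disjoint P Q) : B ∪ P ≠ B ∪ Q := by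
  intro h
  obtain ⟨p, hp⟩ := hP
  have hpBQ : p ∈ B ∪ Q := h ▸ mem_union_right B hp
  rcases mem_union.1 hpBQ with hpB | hpQ
  · exact disjoint_left.1 hBP hpB hp
  · exact disjoint_left.1 hPQ hp hpQ

theorem union_inter_nonempty_of_union_mem {V A B P Q : Finset α} {E₁ E₂ : Finset (Finset α)}
    {k : ℕ} (hE₁ : ∀ e ∈ E₁, (e ∩ A).Nonempty) (hE₂ : ∀ e ∈ E₂, e ⊆ V)
    (hE₂_steiner : ∀ Y ⊆ V, #Y = k → #{e ∈ E₂ | Y ⊆ e} ≤ 1)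
    (hB : #B = k) (hP : P.Nonempty) (hBP : Disjoint B P) (hPQ : Disjoint P Q)
    (hBP_mem : B ∪ P ∈ E₁ ∪ E₂) (hBQ_mem : B ∪ Q ∈ E₁ ∪ E₂) :
    ((B ∪ P ∪ Q) ∩ A).Nonempty := by
  rcases mem_union.1 hBP_mem with hBP₁ | hBP₂
  · exact (hE₁ _ hBP₁).mono (inter_subset_inter_right subset_union_left)
  rcases mem_union.1 hBQ_mem with hBQ₁ | hBQ₂
  · exact (hE₁ _ hBQ₁).mono <| inter_subset_inter_right <|
      union_subset (subset_union_left.trans subset_union_left) subset_union_right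
  have hBV : B ⊆ V := subset_union_left.trans (hE₂ _ hBP₂)
  have h_eq : B ∪ P = B ∪ Q := card_le_one.1 (hE₂_steiner B hBV hB)
    _ (mem_filter.2 ⟨hBP₂, subset_union_left⟩) _ (mem_filter.2 ⟨hBQ₂, subset_union_left⟩)
  exact absurd h_eq (union_ne_union_of_disjoint hP hBP hPQ)

end Finset

theorem ContainsBush.exists_branches {a b s : ℕ} {H : Finset (Finset ℕ)}
    (h : ContainsBush a b s 2 H) :
    ∃ B P Q : Fin s → Finset ℕ, (∀ i, #(B i) = b) ∧ (∀ i, #(P i) = a) ∧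
      (∀ i, Disjoint (B i) (P i)) ∧ (∀ i, Disjoint (P i) (Q i)) ∧
      Pairwise (Disjoint on fun i => B i ∪ P i ∪ Q i) ∧
      (∀ i, B i ∪ P i ∈ H) ∧ (∀ i, B i ∪ Q i ∈ H) := by
  obtain ⟨-, B, P, -, hB, hP, -, -, hBB, hPP, hBP, -, hmem⟩ := h
  refine ⟨B, (P · 0), (P · 1), hB, (hP · 0), fun i => hBP i i 0, fun i => hPP i 0 i 1 (by simp),
    fun i i' hii' => ?_, (hmem · 0), (hmem · 1)⟩
  have hPP' : ∀ j j', Disjoint (P i j) (P i' j') :=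
    fun j j' => hPP i j i' j' fun h => hii' (congrArg Prod.fst h)
  simp only [onFun, disjoint_union_left, disjoint_union_right]
  exact ⟨⟨⟨⟨hBB i i' hii', (hBP i' i 0).symm⟩, (hBP i' i 1).symm⟩,
    ⟨hBP i i' 0, hPP' 0 0⟩, hPP' 1 0⟩, ⟨hBP i i' 1, hPP' 0 1⟩, hPP' 1 1⟩

theorem steiner_construction_bush_free_general (r s n : ℕ) (hs : 2 ≤ s)
    (A : Finset ℕ) (hAcard : A.card = s - 1)
    (E1 E2 : Finset (Finset ℕ))
    (hE1 : E1 = ((Finset.Icc 1 n).powersetCard r).filter fun e => (e ∩ A).card = 1)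
    (hE2 : ∀ e ∈ E2, e ⊆ Finset.Icc 1 n \ A ∧ e.card = r)
    (hSteiner : ∀ Y : Finset ℕ, Y ⊆ Finset.Icc 1 n \ A → Y.card = r - 1 →
      (E2.filter fun e => Y ⊆ e).card ≤ 1) :
    ¬ ContainsBush 1 (r - 1) s 2 (E1 ∪ E2) := by
  intro h
  obtain ⟨B, P, Q, hB, hP, hBP, hPQ, h_disj, hBP_mem, hBQ_mem⟩ := ContainsBush.exists_branches h
  have hE1_meets : ∀ e ∈ E1, (e ∩ A).Nonempty := fun e he => by
    rw [hE1, mem_filter] at he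
    exact card_pos.1 (he.2 ▸ Nat.one_pos)
  have h_meets (i : Fin s) : ((B i ∪ P i ∪ Q i) ∩ A).Nonempty :=
    union_inter_nonempty_of_union_mem hE1_meets (fun e he => (hE2 e he).1) hSteiner (hB i)
      (card_pos.1 ((hP i).symm ▸ Nat.one_pos)) (hBP i) (hPQ i) (hBP_mem i) (hBQ_mem i)
  have := card_le_card_of_pairwise_disjoint_inter_nonempty h_disj h_meets
  rw [Fintype.card_fin] at this
  omega

/-- The `r`-graph `E₁ ∪ E₂`, where `E₁` consists of all `r`-subsets of `[n]` meeting a fixed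
`(s-1)`-set `A` in exactly one vertex, and `E₂` is a partial Steiner system on `[n] \ A`
(every `(r-1)`-subset of `[n] \ A` lies in at most one member), contains no bush
`B_{s,2}(1, r-1)`. -/
theorem steiner_construction_bush_free (r s n : ℕ) (hr : 3 ≤ r) (hs : 2 ≤ s) (hn : s - 1 ≤ n)
    (A : Finset ℕ) (hA : A ⊆ Finset.Icc 1 n) (hAcard : A.card = s - 1)
    (E1 E2 : Finset (Finset ℕ))
    (hE1 : E1 = ((Finset.Icc 1 n).powersetCard r).filter fun e => (e ∩ A).card = 1)
    (hE2 : ∀ e ∈ E2, e ⊆ Finset.Icc 1 n \ A ∧ e.card = r)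
    (hSteiner : ∀ Y : Finset ℕ, Y ⊆ Finset.Icc 1 n \ A → Y.card = r - 1 →
      (E2.filter fun e => Y ⊆ e).card ≤ 1) :
    ¬ ContainsBush 1 (r - 1) s 2 (E1 ∪ E2) :=
  steiner_construction_bush_free_general r s n hs A hAcard E1 E2 hE1 hE2 hSteiner
end

section
/- Let F be a family of r-element subsets of [n] that is r-partite with partition (X_1,…,X_r), and let M ⊆ [r]. Suppose that for every two distinct members F_1, F_2 ∈ F, the pattern Π(F_1 ∩ F_2) does not contain M. Then the map sending F ∈ F to F ∩ (⋃_{j∈M} X_j) is injective on F; consequently |F| ≤ ∏_{j∈M} |X_j|. -/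
/-!
For `j ∈ M` the trace `e ∩ ⋃_{j ∈ M} X_j` determines the singleton `e ∩ X_j`. So if two members
had the same trace, they would share their element in every `X_j` with `j ∈ M`, and the pattern
of their intersection would contain `M`. The bound follows by sending `e` to the tuple of its
singletons `(e ∩ X_j)_{j ∈ M}`, which ranges over a set of size `∏_{j ∈ M} |X_j|`.
-/

/-- `X : Fin r → Finset ℕ` is a partition of `[n]`. -/
def IsPartitionOf (n r : ℕ) (X : Fin r → Finset ℕ) : Prop :=
  (∀ i j : Fin r, i ≠ j → Disjoint (X i) (X j)) ∧
    Finset.univ.biUnion X = Finset.Icc 1 n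

/-- The pattern `Π(S)` of a set `S` with respect to the partition `X`. -/
def pattern {r : ℕ} (X : Fin r → Finset ℕ) (S : Finset ℕ) : Finset (Fin r) :=
  Finset.univ.filter fun i => (S ∩ X i).Nonempty

/-- The intersection structure `I(F, 𝓕) = {F ∩ F' : F' ∈ 𝓕 \ {F}}`. -/
def interStr (F : Finset ℕ) (𝓕 : Finset (Finset ℕ)) : Finset (Finset ℕ) :=
  (𝓕.erase F).image fun F' => F ∩ F'

namespace Finset

variable {α ι : Type*} [DecidableEq α] {X : ι → Finset α} {M : Finset ι} {a b : Finset α}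

lemma inter_biUnion_inter_of_mem {j : ι} (hj : j ∈ M) :
    a ∩ M.biUnion X ∩ X j = a ∩ X j := by
  rw [inter_assoc, inter_eq_right.mpr (subset_biUnion_of_mem X hj)]

lemma inter_biUnion_eq_iff :
    a ∩ M.biUnion X = b ∩ M.biUnion X ↔ ∀ j ∈ M, a ∩ X j = b ∩ X j := by
  refine ⟨fun h j hj => ?_, fun h => ?_⟩
  · rw [← inter_biUnion_inter_of_mem hj, h, inter_biUnion_inter_of_mem hj]
  · simp only [inter_biUnion]
    exact biUnion_congr rfl h

lemma card_le_prod_of_injOn_inter_biUnion [DecidableEq ι] {F : Finset (Finset α)}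
    (hsingle : ∀ e ∈ F, ∀ j ∈ M, (e ∩ X j).card = 1)
    (hinj : Set.InjOn (fun e => e ∩ M.biUnion X) F) :
    F.card ≤ ∏ j ∈ M, (X j).card := by
  have hcard : F.card ≤ (M.pi fun j => (X j).powersetCard 1).card := by
    refine card_le_card_of_injOn (fun e j _ => e ∩ X j) (fun e he => ?_) (fun e₁ h₁ e₂ h₂ h => ?_)
    · simp only [mem_coe, mem_pi, mem_powersetCard]
      exact fun j hj => ⟨inter_subset_right, hsingle e he j hj⟩
    · exact hinj h₁ h₂ (inter_biUnion_eq_iff.mpr fun j hj => congrFun (congrFun h j) hj)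
  simpa only [card_pi, card_powersetCard, Nat.choose_one_right] using hcard

end Finset

open Finset

lemma subset_pattern_inter_of_inter_biUnion_eq {r : ℕ} {X : Fin r → Finset ℕ}
    {M : Finset (Fin r)} {a b : Finset ℕ} (ha : ∀ j ∈ M, (a ∩ X j).Nonempty)
    (hab : a ∩ M.biUnion X = b ∩ M.biUnion X) : M ⊆ pattern X (a ∩ b) := by
  intro j hj
  obtain ⟨x, hx⟩ := ha j hj
  have hxa := mem_inter.mp hx
  have hxb := mem_inter.mp (inter_biUnion_eq_iff.mp hab j hj ▸ hx)
  exact mem_filter.mpr ⟨mem_univ j, x, mem_inter.mpr ⟨mem_inter.mpr ⟨hxa.1, hxb.1⟩, hxa.2⟩⟩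

theorem pattern_injective_general (r : ℕ) (F : Finset (Finset ℕ))
    (X : Fin r → Finset ℕ)
    (hpartite : ∀ e ∈ F, ∀ i, (e ∩ X i).card = 1)
    (M : Finset (Fin r))
    (hM : ∀ F₁ ∈ F, ∀ F₂ ∈ F, F₁ ≠ F₂ → ¬ M ⊆ pattern X (F₁ ∩ F₂)) :
    Set.InjOn (fun e => e ∩ M.biUnion X) ↑F ∧ F.card ≤ ∏ j ∈ M, (X j).card := by
  have hinj : Set.InjOn (fun e => e ∩ M.biUnion X) ↑F := by
    intro a ha b hb hab
    by_contra hne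
    exact hM a ha b hb hne <| subset_pattern_inter_of_inter_biUnion_eq
      (fun j _ => one_le_card.mp (hpartite a ha j).ge) hab
  exact ⟨hinj, card_le_prod_of_injOn_inter_biUnion (fun e he j _ => hpartite e he j) hinj⟩

/-- Remark 2: if `F` is `r`-partite with partition `(X₁,…,X_r)` and no pattern of a pairwise
intersection contains `M ⊆ [r]`, then `F ↦ F ∩ ⋃_{j ∈ M} X_j` is injective on `F`, so
`|F| ≤ ∏_{j ∈ M} |X_j|`. -/
theorem pattern_injective (n r : ℕ) (F : Finset (Finset ℕ))
    (hF : ∀ e ∈ F, e ⊆ Finset.Icc 1 n ∧ e.card = r)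
    (X : Fin r → Finset ℕ) (hX : IsPartitionOf n r X)
    (hpartite : ∀ e ∈ F, ∀ i, (e ∩ X i).card = 1)
    (M : Finset (Fin r))
    (hM : ∀ F₁ ∈ F, ∀ F₂ ∈ F, F₁ ≠ F₂ → ¬ M ⊆ pattern X (F₁ ∩ F₂)) :
    Set.InjOn (fun e => e ∩ M.biUnion X) ↑F ∧ F.card ≤ ∏ j ∈ M, (X j).card :=
  pattern_injective_general r F X hpartite M hM
end

section
/- Let r ≥ 2 and let J be a family of proper subsets of [r] that is (r−2)-covering and closed under intersection. Then there exist an integer k with 0 ≤ k ≤ r and a bijection σ of [r] such that { σ(A) : A ∈ J^(k) } ⊆ J (where σ(A) denotes the image of the set A under σ); that is, J contains a subfamily isomorphic to some J^(k). -/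
/-- The generating sets of `J^(k)`: the sets `[r] \ {i}` for `i ≤ k` (as elements of `Fin r`
with value `< k`), and all `(r-2)`-element subsets of `[r]` containing `{1,…,k}`. -/
def JkGens (r k : ℕ) : Finset (Finset (Fin r)) :=
  ((Finset.univ.filter fun i : Fin r => (i : ℕ) < k).image fun i => Finset.univ.erase i) ∪
    ((Finset.univ : Finset (Fin r)).powersetCard (r - 2)).filter
      fun S => ∀ i : Fin r, (i : ℕ) < k → i ∈ S

/-- The family `J^(k)`: all intersections of nonempty subfamilies of the generators. -/
def Jk (r k : ℕ) : Finset (Finset (Fin r)) :=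
  ((JkGens r k).powerset.filter Finset.Nonempty).image fun G => G.inf id

/-!
Let `K` be the set of `i` with `[r] \ {i} ∈ J` and `k = |K|`, and let `σ` map `{1,…,k}` onto `K`.
The coatom generators of `J^(k)` then go into `J` by the choice of `σ`. An `(r-2)`-set containing
`{1,…,k}` goes to an `(r-2)`-set `T ⊇ K`, which has a proper cover in `J`; that cover is either `T`
or a coatom `[r] \ {j}` with `j ∉ T`, and the latter is impossible since then `j ∈ K ⊆ T`.
Closure under intersection takes care of the rest of `J^(k)`.
-/

open Finset

section CoveringFamily

variable {α : Type*} [Fintype α] [DecidableEq α]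

/-- A cover of `S` in `J` strictly larger than `S` must be a coatom `univ.erase j` with `j ∉ S`. -/
theorem mem_of_card_eq_card_sub_two {J : Finset (Finset α)} (hproper : ∀ A ∈ J, A ⊂ univ)
    (hcover : ∀ S : Finset α, #S = Fintype.card α - 2 → ∃ B ∈ J, S ⊆ B)
    {S : Finset α} (hS : #S = Fintype.card α - 2) (hcoatom : ∀ j, univ.erase j ∈ J → j ∈ S) :
    S ∈ J := by
  obtain ⟨B, hBJ, hSB⟩ := hcover S hS
  obtain ⟨j, -, hjB⟩ := exists_of_ssubset (hproper B hBJ)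
  obtain rfl | hSB := hSB.eq_or_ssubset
  · exact hBJ
  have hB : B = univ.erase j := by
    refine eq_of_subset_of_card_le (fun x hx => mem_erase.mpr ⟨?_, mem_univ x⟩) ?_
    · rintro rfl
      exact hjB hx
    · have := card_lt_card hSB
      rw [card_erase_of_mem (mem_univ j), card_univ]
      omega
  exact absurd (hSB.subset (hcoatom j (hB ▸ hBJ))) hjB

theorem image_inf_mem {β : Type*} [DecidableEq β] {f : α → β} (hf : Function.Injective f)
    {J : Finset (Finset β)} (hinter : ∀ A ∈ J, ∀ B ∈ J, A ∩ B ∈ J)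
    {G : Finset (Finset α)} (hG : G.Nonempty) (hGJ : ∀ A ∈ G, A.image f ∈ J) :
    (G.inf id).image f ∈ J := by
  rw [← inf'_eq_inf hG]
  refine inf'_induction hG id (p := fun A => A.image f ∈ J) (fun A hA B hB => ?_) hGJ
  simpa only [inf_eq_inter, image_inter A B hf] using hinter _ hA _ hB

end CoveringFamily

theorem exists_perm_mem_iff_lt_card {r : ℕ} (K : Finset (Fin r)) :
    ∃ σ : Equiv.Perm (Fin r), ∀ i, σ i ∈ K ↔ (i : ℕ) < #K := by
  have hcard : #{i : Fin r | (i : ℕ) < #K} = #K := by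
    rw [Fin.card_filter_val_lt, min_eq_right (card_le_univ K |>.trans_eq (Fintype.card_fin r))]
  obtain ⟨σ, hσ⟩ := Equiv.Perm.exists_map_finset_eq _ _ hcard
  refine ⟨σ, fun i => ?_⟩
  conv_lhs => rw [← hσ]
  simp

theorem image_mem_of_mem_JkGens {r k : ℕ} {J : Finset (Finset (Fin r))}
    (hproper : ∀ A ∈ J, A ⊂ univ)
    (hcover : ∀ S : Finset (Fin r), #S = r - 2 → ∃ B ∈ J, S ⊆ B)
    {σ : Equiv.Perm (Fin r)} (hσ : ∀ i, univ.erase (σ i) ∈ J ↔ (i : ℕ) < k) :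
    ∀ A ∈ JkGens r k, A.image σ ∈ J := by
  intro A hA
  rcases mem_union.mp hA with hA | hA
  · obtain ⟨i, hi, rfl⟩ := mem_image.mp hA
    rw [image_erase σ.injective, image_univ_equiv]
    exact (hσ i).mpr (mem_filter.mp hi).2
  · obtain ⟨hAcard, hAk⟩ := mem_filter.mp hA
    rw [mem_powersetCard_univ] at hAcard
    refine mem_of_card_eq_card_sub_two hproper (by simpa using hcover) ?_ fun j hj => ?_
    · rw [card_image_of_injective _ σ.injective, hAcard, Fintype.card_fin]
    · rw [← σ.apply_symm_apply j] at hj ⊢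
      exact mem_image_of_mem σ (hAk _ ((hσ _).mp hj))

theorem covering_contains_Jk_general (r : ℕ) (J : Finset (Finset (Fin r)))
    (hproper : ∀ A ∈ J, A ⊂ Finset.univ)
    (hcover : ∀ S : Finset (Fin r), S.card = r - 2 → ∃ B ∈ J, S ⊆ B)
    (hinter : ∀ A ∈ J, ∀ B ∈ J, A ∩ B ∈ J) :
    ∃ k ≤ r, ∃ σ : Equiv.Perm (Fin r), ∀ A ∈ Jk r k, A.image σ ∈ J := by
  set K : Finset (Fin r) := {i | univ.erase i ∈ J}
  obtain ⟨σ, hσ⟩ := exists_perm_mem_iff_lt_card K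
  refine ⟨#K, card_le_univ K |>.trans_eq (Fintype.card_fin r), σ, ?_⟩
  have hgen : ∀ A ∈ JkGens r #K, A.image σ ∈ J :=
    image_mem_of_mem_JkGens hproper hcover fun i => by simpa [K] using hσ i
  intro A hA
  obtain ⟨G, hG, rfl⟩ := mem_image.mp hA
  obtain ⟨hGgen, hGne⟩ := mem_filter.mp hG
  exact image_inf_mem σ.injective hinter hGne fun A hA => hgen A (mem_powerset.mp hGgen hA)

/-- Statement (2.2): every `(r-2)`-covering family of proper subsets of `[r]` closed under
intersection contains a subfamily isomorphic to some `J^(k)`. -/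
theorem covering_contains_Jk (r : ℕ) (hr : 2 ≤ r) (J : Finset (Finset (Fin r)))
    (hproper : ∀ A ∈ J, A ⊂ Finset.univ)
    (hcover : ∀ S : Finset (Fin r), S.card = r - 2 → ∃ B ∈ J, S ⊆ B)
    (hinter : ∀ A ∈ J, ∀ B ∈ J, A ∩ B ∈ J) :
    ∃ k ≤ r, ∃ σ : Equiv.Perm (Fin r), ∀ A ∈ Jk r k, A.image σ ∈ J :=
  covering_contains_Jk_general r J hproper hcover hinter
end

section
/- Let a, b, s, h be positive integers with r = a + b, and let H be an r-graph that does not contain the bush B_{s,h}(a,b). Then there do not exist pairwise disjoint vertex sets A_0, B_1, B_2, …, B_s with |A_0| = a and |B_1| = … = |B_s| = b such that every B_i is a (b, s·h·r)-kernel in H and A_0 ∪ B_i is an edge of H for every i = 1,…,s. -/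
/-- `A` is the kernel of a `q`-star (Δ-system of `q` sets with pairwise intersections `A`)
in the family `𝓕`. -/
def IsKernelOf (q : ℕ) (𝓕 : Finset (Finset ℕ)) (A : Finset ℕ) : Prop :=
  ∃ S ⊆ 𝓕, S.card = q ∧ ∀ P₁ ∈ S, ∀ P₂ ∈ S, P₁ ≠ P₂ → P₁ ∩ P₂ = A

/-!
Each `Bᵢ` is the kernel of a sunflower in `H` with `s·h·r` petals; the petals are pairwise disjoint
`a`-sets avoiding `Bᵢ`. Pick `h` petals for each `i` in turn, avoiding `A₀`, the other `Bᵢ'` and the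
petals picked so far: these are at most `a + (s-1)b + (s-1)ha ≤ shr - h` vertices, and as the
petals are disjoint each vertex blocks at most one of them. The chosen petals complete `A₀, Bᵢ`
to a bush.
-/

open Finset

section PairwiseDisjointFamily

variable {α : Type*} [DecidableEq α]

theorem card_filter_not_disjoint_le {𝒜 : Finset (Finset α)}
    (h𝒜 : (𝒜 : Set (Finset α)).PairwiseDisjoint id) (F : Finset α) :
    #{p ∈ 𝒜 | ¬Disjoint p F} ≤ #F := by
  calc #{p ∈ 𝒜 | ¬Disjoint p F}
      ≤ #({p ∈ 𝒜 | ¬Disjoint p F}.biUnion (· ∩ F)) := by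
        refine card_le_card_biUnion ?_ fun p hp => ?_
        · exact (h𝒜.subset (coe_subset.mpr (filter_subset _ _))).mono fun p => inter_subset_left
        · exact not_disjoint_iff_nonempty_inter.mp (mem_filter.mp hp).2
    _ ≤ #F := card_le_card (biUnion_subset.mpr fun _ _ => inter_subset_right)

theorem exists_embedding_disjoint {𝒜 : Finset (Finset α)}
    (h𝒜 : (𝒜 : Set (Finset α)).PairwiseDisjoint id) (F : Finset α) {h : ℕ}
    (hcard : h + #F ≤ #𝒜) :
    ∃ Q : Fin h ↪ Finset α, ∀ j, Q j ∈ 𝒜 ∧ Disjoint (Q j) F := by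
  have hgood : h ≤ #{p ∈ 𝒜 | Disjoint p F} := by
    have := card_filter_add_card_filter_not (s := 𝒜) (Disjoint · F)
    have := card_filter_not_disjoint_le h𝒜 F
    omega
  obtain ⟨Q⟩ := Function.Embedding.nonempty_of_card_le (α := Fin h)
    (β := {p ∈ 𝒜 | Disjoint p F}) (by simpa)
  exact ⟨Q.trans (.subtype _), fun j => mem_filter.mp (Q j).2⟩

theorem exists_pairwise_disjoint_choice {ι : Type*} [DecidableEq ι] {a h : ℕ}
    (𝒜 : ι → Finset (Finset α)) (K : ι → Finset α) (I : Finset ι)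
    (h𝒜 : ∀ i ∈ I, (𝒜 i : Set (Finset α)).PairwiseDisjoint id)
    (hcard : ∀ i ∈ I, ∀ p ∈ 𝒜 i, #p ≤ a)
    (hsize : ∀ i ∈ I, h + #(K i) + (#I - 1) * (h * a) ≤ #(𝒜 i)) :
    ∃ P : ι → Fin h → Finset α, (∀ i ∈ I, ∀ j, P i j ∈ 𝒜 i ∧ Disjoint (P i j) (K i)) ∧
      ∀ i ∈ I, ∀ i' ∈ I, ∀ j j', (i, j) ≠ (i', j') → Disjoint (P i j) (P i' j') := by
  induction I using Finset.induction_on with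
  | empty => exact ⟨fun _ _ => ∅, by simp, by simp⟩
  | insert i I hi ih =>
    obtain ⟨P, hP, hPP⟩ := ih (fun i' hi' => h𝒜 i' (mem_insert_of_mem hi'))
      (fun i' hi' => hcard i' (mem_insert_of_mem hi')) fun i' hi' => by
        have := hsize i' (mem_insert_of_mem hi')
        rw [card_insert_of_notMem hi] at this
        exact le_trans (by gcongr; omega) this
    set U := I.biUnion fun i' => univ.biUnion (P i')
    have hU : #U ≤ #I * (h * a) := by
      refine card_biUnion_le_card_mul _ _ _ fun i' hi' => ?_
      simpa using card_biUnion_le_card_mul univ (P i') a fun j _ =>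
        hcard i' (mem_insert_of_mem hi') _ (hP i' hi' j).1
    obtain ⟨Q, hQ⟩ := exists_embedding_disjoint (h𝒜 i (mem_insert_self i I)) (K i ∪ U)
      (h := h) (by
      have := hsize i (mem_insert_self i I)
      rw [card_insert_of_notMem hi, Nat.add_sub_cancel] at this
      have := card_union_le (K i) U
      omega)
    have hQU : ∀ j, ∀ i' ∈ I, ∀ j', Disjoint (Q j) (P i' j') := fun j i' hi' j' =>
      (disjoint_union_right.mp (hQ j).2).2.mono_right
        (subset_biUnion_of_mem _ hi' |>.trans' (subset_biUnion_of_mem _ (mem_univ j')))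
    have hne : ∀ i' ∈ I, i' ≠ i := fun i' hi' hii' => hi (hii' ▸ hi')
    refine ⟨Function.update P i Q, fun i' hi' j => ?_, fun i₁ hi₁ i₂ hi₂ j₁ j₂ h12 => ?_⟩
    · rcases mem_insert.mp hi' with rfl | hi'
      · simpa using ⟨(hQ j).1, (disjoint_union_right.mp (hQ j).2).1⟩
      · simpa [hne i' hi'] using hP i' hi' j
    · rcases mem_insert.mp hi₁ with h₁ | hi₁ <;> rcases mem_insert.mp hi₂ with h₂ | hi₂
      · subst i₁ i₂
        have hj : j₁ ≠ j₂ := fun hjj => h12 (hjj ▸ rfl)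
        simpa [Function.onFun] using
          h𝒜 i (mem_insert_self i I) (hQ j₁).1 (hQ j₂).1 (Q.injective.ne hj)
      · subst i₁
        simpa [hne i₂ hi₂] using hQU j₁ i₂ hi₂ j₂
      · subst i₂
        simpa [hne i₁ hi₁] using (hQU j₂ i₁ hi₁ j₁).symm
      · simpa [hne i₁ hi₁, hne i₂ hi₂] using hPP i₁ hi₁ i₂ hi₂ j₁ j₂ h12

end PairwiseDisjointFamily

theorem IsKernelOf.exists_petals {q : ℕ} {H : Finset (Finset ℕ)} {B : Finset ℕ} (hq : 2 ≤ q)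
    (hB : IsKernelOf q H B) :
    ∃ 𝒜 : Finset (Finset ℕ), #𝒜 = q ∧ (𝒜 : Set (Finset ℕ)).PairwiseDisjoint id ∧
      ∀ p ∈ 𝒜, Disjoint B p ∧ B ∪ p ∈ H := by
  obtain ⟨S, hSH, hSq, hS⟩ := hB
  have hBsub : ∀ e ∈ S, B ⊆ e := fun e he => by
    obtain ⟨e', he', hne⟩ := exists_mem_ne (by omega : 1 < #S) e
    exact hS e' he' e he hne ▸ inter_subset_right
  refine ⟨S.image (· \ B), ?_, ?_, ?_⟩
  · rw [card_image_of_injOn fun e he e' he' hee' => by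
      rw [← union_sdiff_of_subset (hBsub e he), ← union_sdiff_of_subset (hBsub e' he')]
      exact congrArg (B ∪ ·) hee', hSq]
  · rintro _ hp _ hp' hne
    obtain ⟨e, he, rfl⟩ := mem_image.mp hp
    obtain ⟨e', he', rfl⟩ := mem_image.mp hp'
    have hee' : e ≠ e' := fun hee => hne (hee ▸ rfl)
    refine disjoint_left.mpr fun v hv hv' => (mem_sdiff.mp hv).2 ?_
    exact hS e he e' he' hee' ▸ mem_inter.mpr ⟨(mem_sdiff.mp hv).1, (mem_sdiff.mp hv').1⟩
  · simp only [mem_image]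
    rintro _ ⟨e, he, rfl⟩
    exact ⟨disjoint_sdiff, (union_sdiff_of_subset (hBsub e he)).symm ▸ hSH he⟩

theorem le_mul_mul_add_of_pos {a b s h : ℕ} (hb : 0 < b) (hh : 0 < h) (hs : 0 < s) :
    h + (a + (s - 1) * b) + (s - 1) * (h * a) ≤ s * h * (a + b) := by
  obtain ⟨n, rfl⟩ : ∃ n, s = n + 1 := ⟨s - 1, by omega⟩
  simp only [Nat.add_sub_cancel]
  nlinarith [Nat.mul_le_mul_left (n * h) hb, Nat.mul_le_mul_left n hh, Nat.mul_le_mul_left a hh]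

theorem no_kernel_star_general (a b s h r : ℕ) (ha : 0 < a) (hb : 0 < b) (hh : 0 < h)
    (hr : r = a + b)
    (H : Finset (Finset ℕ)) (hHcard : ∀ e ∈ H, e.card = r)
    (hbush : ¬ ContainsBush a b s h H) :
    ¬ ∃ (A0 : Finset ℕ) (B : Fin s → Finset ℕ),
        A0.card = a ∧ (∀ i, (B i).card = b) ∧
        (∀ i, Disjoint A0 (B i)) ∧
        (∀ i i', i ≠ i' → Disjoint (B i) (B i')) ∧
        (∀ i, IsKernelOf (s * h * r) H (B i)) ∧
        (∀ i, A0 ∪ B i ∈ H) := by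
  rintro ⟨A0, B, hA0, hB, hA0B, hBB, hker, hA0BH⟩
  have hq (i : Fin s) : 2 ≤ s * h * r :=
    le_trans (by omega) (Nat.le_mul_of_pos_left r (Nat.mul_pos i.pos hh))
  choose 𝒜 h𝒜card h𝒜disj h𝒜mem using fun i => (hker i).exists_petals (hq i)
  have hpetal (i : Fin s) (p) (hp : p ∈ 𝒜 i) : #p = a := by
    have := hHcard _ (h𝒜mem i p hp).2
    rw [card_union_of_disjoint (h𝒜mem i p hp).1, hB i] at this
    omega
  set K := fun i => A0 ∪ (univ.erase i).biUnion B
  have hK (i : Fin s) : #(K i) ≤ a + (s - 1) * b := by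
    refine (card_union_le _ _).trans (add_le_add hA0.le ?_)
    simpa using card_biUnion_le_card_mul (univ.erase i) B b fun i _ => (hB i).le
  obtain ⟨P, hP, hPP⟩ := exists_pairwise_disjoint_choice 𝒜 K univ (fun i _ => h𝒜disj i)
    (fun i _ p hp => (hpetal i p hp).le) fun i _ => by
      simpa [h𝒜card, hr] using
        le_trans (by gcongr; exact hK i) (le_mul_mul_add_of_pos hb hh i.pos)
  have hPK (i j) := disjoint_union_right.mp (hP i (mem_univ i) j).2
  refine hbush ⟨A0, B, P, hA0, hB, fun i j => hpetal i _ (hP i (mem_univ i) j).1, hA0B,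
    fun i j => (hPK i j).1.symm, hBB, fun i j i' j' => hPP i (mem_univ i) i' (mem_univ i') j j',
    fun i i' j => ?_, hA0BH, fun i j => (h𝒜mem i _ (hP i (mem_univ i) j).1).2⟩
  by_cases hii' : i = i'
  · exact hii' ▸ (h𝒜mem i _ (hP i (mem_univ i) j).1).1
  · exact (hPK i' j).2.symm.mono_left
      (subset_biUnion_of_mem B (mem_erase.mpr ⟨hii', mem_univ i⟩))

/-- Lemma 3.1: if an `r`-graph `H` (with `r = a + b`) contains no bush `B_{s,h}(a,b)`, then
there do not exist pairwise disjoint sets `A₀, B₁,…,B_s` with `|A₀| = a`, `|Bᵢ| = b`, each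
`Bᵢ` a `(b, shr)`-kernel in `H`, and `A₀ ∪ Bᵢ ∈ H` for all `i`. -/
theorem no_kernel_star (a b s h r : ℕ) (ha : 0 < a) (hb : 0 < b) (hs : 0 < s) (hh : 0 < h)
    (hr : r = a + b)
    (H : Finset (Finset ℕ)) (hHcard : ∀ e ∈ H, e.card = r)
    (hbush : ¬ ContainsBush a b s h H) :
    ¬ ∃ (A0 : Finset ℕ) (B : Fin s → Finset ℕ),
        A0.card = a ∧ (∀ i, (B i).card = b) ∧
        (∀ i, Disjoint A0 (B i)) ∧
        (∀ i i', i ≠ i' → Disjoint (B i) (B i')) ∧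
        (∀ i, IsKernelOf (s * h * r) H (B i)) ∧
        (∀ i, A0 ∪ B i ∈ H) :=
  no_kernel_star_general a b s h r ha hb hh hr H hHcard hbush
end

section
/- Let a, b, s, h be positive integers with r = a + b. Let G be a nonempty family of r-element subsets of [n] that is r-partite with partition (X_1,…,X_r), and let J be a family of proper subsets of [r] such that for every F ∈ G and every A ∈ J, the set { x ∈ F : x ∈ X_i for some i ∈ A } is the kernel of an (s·h·r)-star in G. If G does not contain the bush B_{s,h}(a,b), then J does not contain two disjoint members A and B with |A| = a and |B| = b. -/
open Finset Function

section Sunflower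

variable {α : Type*} [DecidableEq α] {S : Finset (Finset α)} {K : Finset α}

lemma subset_of_pairwise_inter_eq (hS : (S : Set (Finset α)).Pairwise (· ∩ · = K))
    (hcard : 1 < #S) {T : Finset α} (hT : T ∈ S) : K ⊆ T := by
  obtain ⟨T', hT', hne⟩ := exists_mem_ne hcard T
  exact hS hT hT' hne.symm ▸ inter_subset_left

lemma disjoint_sdiff_of_pairwise_inter_eq (hS : (S : Set (Finset α)).Pairwise (· ∩ · = K))
    {T₁ T₂ : Finset α} (h₁ : T₁ ∈ S) (h₂ : T₂ ∈ S) (hne : T₁ ≠ T₂) :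
    Disjoint (T₁ \ K) (T₂ \ K) := by
  rw [← hS h₁ h₂ hne, sdiff_inter_self_right, sdiff_inter_self_left]
  exact disjoint_sdiff_sdiff

lemma card_filter_not_disjoint_sdiff_le (hS : (S : Set (Finset α)).Pairwise (· ∩ · = K))
    (W : Finset α) : #(S.filter fun T => ¬ Disjoint (T \ K) W) ≤ #W := by
  set bad := S.filter fun T => ¬ Disjoint (T \ K) W
  calc #bad = ∑ _ ∈ bad, 1 := card_eq_sum_ones bad
    _ ≤ ∑ T ∈ bad, #((T \ K) ∩ W) := sum_le_sum fun T hT =>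
        card_pos.2 (not_disjoint_iff_nonempty_inter.1 (mem_filter.1 hT).2)
    _ = #(bad.biUnion fun T => (T \ K) ∩ W) := by
        refine (card_biUnion fun T₁ h₁ T₂ h₂ hne => ?_).symm
        exact (disjoint_sdiff_of_pairwise_inter_eq hS (mem_filter.1 h₁).1 (mem_filter.1 h₂).1
          hne).mono inter_subset_left inter_subset_left
    _ ≤ #W := card_le_card (biUnion_subset.2 fun _ _ => inter_subset_right)

lemma exists_embedding_disjoint_sdiff (hS : (S : Set (Finset α)).Pairwise (· ∩ · = K))
    (W : Finset α) {m : ℕ} (hm : m + #W ≤ #S) :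
    ∃ f : Fin m ↪ Finset α, ∀ j, f j ∈ S ∧ Disjoint (f j \ K) W := by
  have hgood : Fintype.card (Fin m) ≤ #(S.filter fun T => Disjoint (T \ K) W) := by
    have := card_filter_add_card_filter_not (s := S) (fun T => Disjoint (T \ K) W)
    have := card_filter_not_disjoint_sdiff_le hS W
    rw [Fintype.card_fin]
    omega
  obtain ⟨f, hf⟩ := Function.Embedding.exists_of_card_le_finset hgood
  exact ⟨f, fun j => mem_filter.1 (hf ⟨j, rfl⟩)⟩

end Sunflower

section Petals

variable {α ι : Type*} [DecidableEq α] [DecidableEq ι]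

def IsDisjointPetalChoice (S : ι → Finset (Finset α)) (K : ι → Finset α) (W : Finset α)
    (I : Finset ι) {h : ℕ} (T : ι → Fin h → Finset α) : Prop :=
  (∀ i ∈ I, ∀ j, T i j ∈ S i ∧ Disjoint (T i j \ K i) W) ∧
    ∀ i ∈ I, ∀ i' ∈ I, ∀ j j', (i, j) ≠ (i', j') → Disjoint (T i j \ K i) (T i' j' \ K i')

variable {S : ι → Finset (Finset α)} {K : ι → Finset α} {W : Finset α}

/-- The petals chosen so far cover at most `#I * (h * a)` points. -/
lemma IsDisjointPetalChoice.exists_insert {I : Finset ι} {a h : ℕ} {T : ι → Fin h → Finset α}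
    (hT : IsDisjointPetalChoice S K W I T) (hpetal : ∀ k ∈ I, ∀ T ∈ S k, #(T \ K k) ≤ a)
    {i : ι} (hi : i ∉ I) (hS : (S i : Set (Finset α)).Pairwise (· ∩ · = K i))
    (hcard : h + #W + #I * (h * a) ≤ #(S i)) :
    ∃ T' : ι → Fin h → Finset α, IsDisjointPetalChoice S K W (insert i I) T' := by
  set U := W ∪ I.biUnion fun k => univ.biUnion fun j => T k j \ K k
  have hU : #U ≤ #W + #I * (h * a) := by
    refine (card_union_le _ _).trans (Nat.add_le_add_left ?_ _)
    refine card_biUnion_le_card_mul _ _ _ fun k hk => ?_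
    simpa using card_biUnion_le_card_mul univ _ a fun j _ => hpetal k hk _ (hT.1 k hk j).1
  have hold : ∀ k ∈ I, ∀ j, T k j \ K k ⊆ U := fun k hk j =>
    subset_union_right.trans' (subset_biUnion_of_mem _ hk |>.trans' <|
      subset_biUnion_of_mem (fun j => T k j \ K k) (mem_univ j))
  obtain ⟨f, hf⟩ := exists_embedding_disjoint_sdiff hS U (m := h) (by omega)
  have hne : ∀ {k}, k ∈ I → k ≠ i := fun hk => ne_of_mem_of_not_mem hk hi
  refine ⟨Function.update T i f, fun k hk j => ?_, fun k₁ hk₁ k₂ hk₂ j₁ j₂ hj => ?_⟩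
  · rcases mem_insert.1 hk with rfl | hk
    · simpa using ⟨(hf j).1, (hf j).2.mono_right subset_union_left⟩
    · simpa [Function.update_of_ne (hne hk)] using hT.1 k hk j
  rcases mem_insert.1 hk₁ with rfl | hI₁ <;> rcases mem_insert.1 hk₂ with h₂ | hI₂
  · subst h₂
    simp only [Function.update_self]
    exact disjoint_sdiff_of_pairwise_inter_eq hS (hf j₁).1 (hf j₂).1
      (f.injective.ne fun h => hj (by rw [h]))
  · simp only [Function.update_self, Function.update_of_ne (hne hI₂)]
    exact (hf j₁).2.mono_right (hold k₂ hI₂ j₂)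
  · subst h₂
    simp only [Function.update_self, Function.update_of_ne (hne hI₁)]
    exact ((hf j₂).2.mono_right (hold k₁ hI₁ j₁)).symm
  · simp only [Function.update_of_ne (hne hI₁), Function.update_of_ne (hne hI₂)]
    exact hT.2 k₁ hI₁ k₂ hI₂ j₁ j₂ hj

lemma exists_isDisjointPetalChoice {a h : ℕ} (I : Finset ι)
    (hS : ∀ i ∈ I, (S i : Set (Finset α)).Pairwise (· ∩ · = K i))
    (hpetal : ∀ i ∈ I, ∀ T ∈ S i, #(T \ K i) ≤ a)
    (hcard : ∀ i ∈ I, h + #W + #(I.erase i) * (h * a) ≤ #(S i)) :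
    ∃ T : ι → Fin h → Finset α, IsDisjointPetalChoice S K W I T := by
  induction I using Finset.induction_on with
  | empty => exact ⟨fun _ _ => ∅, by simp [IsDisjointPetalChoice]⟩
  | @insert i I hi ih =>
    have hsub := subset_insert i I
    obtain ⟨T, hT⟩ := ih (fun k hk => hS k (hsub hk)) (fun k hk => hpetal k (hsub hk))
      fun k hk => (hcard k (hsub hk)).trans' <| Nat.add_le_add_left
        (Nat.mul_le_mul_right _ (card_le_card (erase_subset_erase _ hsub))) _
    refine hT.exists_insert (fun k hk => hpetal k (hsub hk)) hi (hS i (mem_insert_self i I)) ?_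
    simpa [erase_insert hi] using hcard i (mem_insert_self i I)

end Petals

lemma Finset.sdiff_eq_inter_of_subset_of_card_le {α : Type*} [DecidableEq α]
    {e K Y Z : Finset α} (hcov : e ⊆ Y ∪ Z) (hYZ : Disjoint Y Z) (hKe : K ⊆ e) (hKY : K ⊆ Y)
    (hcard : #(e ∩ Y) ≤ #K) : e \ K = e ∩ Z := by
  rw [eq_of_subset_of_card_le (subset_inter hKe hKY) hcard, sdiff_inter_self_left]
  ext x
  simp only [mem_sdiff, mem_inter]
  exact ⟨fun ⟨hx, hxY⟩ => ⟨hx, (mem_union.1 (hcov hx)).resolve_left hxY⟩,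
    fun ⟨hx, hxZ⟩ => ⟨hx, disjoint_right.1 hYZ hxZ⟩⟩

lemma IsKernelOf.exists_sdiff_eq_inter {q a : ℕ} {G : Finset (Finset ℕ)} {Y Z e : Finset ℕ}
    (hq : 1 < q) (hYZ : Disjoint Y Z) (hcov : ∀ T ∈ G, T ⊆ Y ∪ Z)
    (hY : ∀ T ∈ G, #(T ∩ Y) = a) (he : e ∈ G) (hker : IsKernelOf q G (e ∩ Y)) :
    ∃ S ⊆ G, #S = q ∧ (S : Set (Finset ℕ)).Pairwise (· ∩ · = e ∩ Y) ∧
      ∀ T ∈ S, e ∩ Y ⊆ T ∧ T \ (e ∩ Y) = T ∩ Z := by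
  obtain ⟨S, hSG, hSc, hS⟩ := hker
  have hsub : ∀ T ∈ S, e ∩ Y ⊆ T := fun T hT => subset_of_pairwise_inter_eq hS (hSc ▸ hq) hT
  refine ⟨S, hSG, hSc, hS, fun T hT => ⟨hsub T hT, ?_⟩⟩
  exact sdiff_eq_inter_of_subset_of_card_le (hcov T (hSG hT)) hYZ (hsub T hT) inter_subset_right
    (by rw [hY T (hSG hT), hY e he])

theorem containsBush_of_forall_isKernelOf {a b s h : ℕ} (ha : 0 < a) (hb : 0 < b) (hs : 0 < s)
    (hh : 0 < h) {G : Finset (Finset ℕ)} (hne : G.Nonempty) {Y Z : Finset ℕ}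
    (hYZ : Disjoint Y Z) (hcov : ∀ e ∈ G, e ⊆ Y ∪ Z) (hY : ∀ e ∈ G, #(e ∩ Y) = a)
    (hZ : ∀ e ∈ G, #(e ∩ Z) = b) (hkerY : ∀ e ∈ G, IsKernelOf (s * h * (a + b)) G (e ∩ Y))
    (hkerZ : ∀ e ∈ G, IsKernelOf (s * h * (a + b)) G (e ∩ Z)) :
    ContainsBush a b s h G := by
  have hq : 1 < s * h * (a + b) := by nlinarith [Nat.mul_pos hs hh]
  have hroom : h + a + (s - 1) * (h * a) ≤ s * h * (a + b) := by
    obtain ⟨t, rfl⟩ : ∃ t, s = t + 1 := ⟨s - 1, by omega⟩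
    rw [Nat.add_sub_cancel]
    nlinarith [Nat.le_mul_of_pos_left a hh, Nat.le_mul_of_pos_right h hb]
  have hcov' : ∀ e ∈ G, e ⊆ Z ∪ Y := fun e he => union_comm Y Z ▸ hcov e he
  obtain ⟨F, hF⟩ := hne
  obtain ⟨S₀, hS₀G, hS₀c, hS₀, hFE⟩ := (hkerY F hF).exists_sdiff_eq_inter hq hYZ hcov hY hF
  obtain ⟨E, hE⟩ := Function.Embedding.exists_of_card_le_finset (α := Fin s) (s := S₀)
    (by rw [Fintype.card_fin, hS₀c]; nlinarith [Nat.mul_pos hs hh])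
  have hES : ∀ i, E i ∈ S₀ := fun i => hE ⟨i, rfl⟩
  have hEG : ∀ i, E i ∈ G := fun i => hS₀G (hES i)
  choose S hSG hSc hS hET using fun i =>
    (hkerZ (E i) (hEG i)).exists_sdiff_eq_inter hq hYZ.symm hcov' hZ (hEG i)
  obtain ⟨T, hT, hTdisj⟩ := exists_isDisjointPetalChoice (S := S) (K := fun i => E i ∩ Z)
    (W := F ∩ Y) (a := a) (h := h) univ (fun i _ => hS i)
    (fun i _ T hT => by rw [(hET i T hT).2, hY _ (hSG i hT)]) fun i _ => by
      rwa [hSc, card_erase_of_mem (mem_univ i), card_univ, Fintype.card_fin, hY F hF]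
  have hTS : ∀ i j, T i j ∈ S i := fun i j => (hT i (mem_univ i) j).1
  refine ⟨F ∩ Y, fun i => E i ∩ Z, fun i j => T i j \ (E i ∩ Z), hY F hF, fun i => hZ _ (hEG i),
    fun i j => ?_, fun i => hYZ.mono inter_subset_right inter_subset_right,
    fun i j => (hT i (mem_univ i) j).2.symm, fun i i' hi => ?_,
    fun i j i' j' hne => hTdisj i (mem_univ i) i' (mem_univ i') j j' hne, fun i i' j => ?_,
    fun i => ?_, fun i j => ?_⟩ <;> dsimp only
  · rw [(hET i _ (hTS i j)).2, hY _ (hSG i (hTS i j))]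
  · rw [← (hFE _ (hES i)).2, ← (hFE _ (hES i')).2]
    exact disjoint_sdiff_of_pairwise_inter_eq hS₀ (hES i) (hES i') (E.injective.ne hi)
  · rw [(hET i' _ (hTS i' j)).2]
    exact hYZ.symm.mono inter_subset_right inter_subset_right
  · rw [← (hFE _ (hES i)).2, union_sdiff_of_subset (hFE _ (hES i)).1]
    exact hEG i
  · rw [union_sdiff_of_subset (hET i _ (hTS i j)).1]
    exact hSG i (hTS i j)

section Partition

variable {α ι : Type*} [DecidableEq α] {X : ι → Finset α}

lemma Finset.filter_exists_mem_eq_inter_biUnion (e : Finset α) (C : Finset ι)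
    [DecidablePred fun x => ∃ i ∈ C, x ∈ X i] :
    e.filter (fun x => ∃ i ∈ C, x ∈ X i) = e ∩ C.biUnion X := by
  ext
  simp

lemma Finset.card_inter_biUnion_of_card_inter_eq_one (hX : Pairwise (Disjoint on X))
    {e : Finset α} (he : ∀ i, #(e ∩ X i) = 1) (C : Finset ι) : #(e ∩ C.biUnion X) = #C := by
  rw [inter_biUnion, card_biUnion fun i _ j _ hij =>
    (hX hij).mono inter_subset_right inter_subset_right]
  simp [he]

end Partition

theorem no_disjoint_patterns_general (a b s h r n : ℕ) (ha : 0 < a) (hb : 0 < b) (hs : 0 < s)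
    (hh : 0 < h) (hr : r = a + b)
    (G : Finset (Finset ℕ)) (hne : G.Nonempty)
    (hG : ∀ e ∈ G, e ⊆ Finset.Icc 1 n ∧ e.card = r)
    (X : Fin r → Finset ℕ) (hX : IsPartitionOf n r X)
    (hpartite : ∀ e ∈ G, ∀ i, (e ∩ X i).card = 1)
    (J : Finset (Finset (Fin r)))
    (hker : ∀ F ∈ G, ∀ A ∈ J,
      IsKernelOf (s * h * r) G (F.filter fun x => ∃ i ∈ A, x ∈ X i))
    (hbush : ¬ ContainsBush a b s h G) :
    ¬ ∃ A ∈ J, ∃ B ∈ J, Disjoint A B ∧ A.card = a ∧ B.card = b := by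
  rintro ⟨A, hAJ, B, hBJ, hAB, hA, hB⟩
  subst hr
  have hunion : A ∪ B = univ :=
    eq_univ_of_card _ (by rw [card_union_of_disjoint hAB, hA, hB, Fintype.card_fin])
  have hYZ : Disjoint (A.biUnion X) (B.biUnion X) :=
    (disjoint_biUnion_left _ _ _).2 fun i hi => (disjoint_biUnion_right _ _ _).2 fun j hj =>
      hX.1 i j fun hij => disjoint_left.1 hAB hi (hij ▸ hj)
  have hcov : ∀ e ∈ G, e ⊆ A.biUnion X ∪ B.biUnion X := fun e he => by
    rw [← union_biUnion, hunion, hX.2]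
    exact (hG e he).1
  refine hbush (containsBush_of_forall_isKernelOf ha hb hs hh hne hYZ hcov
    (fun e he => (card_inter_biUnion_of_card_inter_eq_one hX.1 (hpartite e he) A).trans hA)
    (fun e he => (card_inter_biUnion_of_card_inter_eq_one hX.1 (hpartite e he) B).trans hB)
    (fun e he => ?_) (fun e he => ?_))
  · rw [← filter_exists_mem_eq_inter_biUnion]
    exact hker e he A hAJ
  · rw [← filter_exists_mem_eq_inter_biUnion]
    exact hker e he B hBJ

/-- Lemma 3.2: let `G` be a nonempty `r`-partite family of `r`-subsets of `[n]` such that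
for every `F ∈ G` and every `A ∈ J` (a family of proper subsets of `[r]`), the part of `F`
lying in the parts indexed by `A` is the kernel of an `shr`-star in `G`. If `G` contains no
bush `B_{s,h}(a,b)`, then `J` has no two disjoint members of sizes `a` and `b`. -/
theorem no_disjoint_patterns (a b s h r n : ℕ) (ha : 0 < a) (hb : 0 < b) (hs : 0 < s)
    (hh : 0 < h) (hr : r = a + b)
    (G : Finset (Finset ℕ)) (hne : G.Nonempty)
    (hG : ∀ e ∈ G, e ⊆ Finset.Icc 1 n ∧ e.card = r)
    (X : Fin r → Finset ℕ) (hX : IsPartitionOf n r X)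
    (hpartite : ∀ e ∈ G, ∀ i, (e ∩ X i).card = 1)
    (J : Finset (Finset (Fin r))) (hproper : ∀ A ∈ J, A ⊂ Finset.univ)
    (hker : ∀ F ∈ G, ∀ A ∈ J,
      IsKernelOf (s * h * r) G (F.filter fun x => ∃ i ∈ A, x ∈ X i))
    (hbush : ¬ ContainsBush a b s h G) :
    ¬ ∃ A ∈ J, ∃ B ∈ J, Disjoint A B ∧ A.card = a ∧ B.card = b :=
  no_disjoint_patterns_general a b s h r n ha hb hs hh hr G hne hG X hX hpartite J hker hbush
end

section
/- Let a + b = r. (i) If 2 ≤ a, b ≤ r − 2, then for each k with 0 ≤ k ≤ r − 2 and for k = r, the family J^(k) contains two disjoint members A and B with |A| = a and |B| = b, unless (r, a, b, k) = (4, 2, 2, 1). (ii) If (a, b) = (1, r−1) or (a, b) = (r−1, 1) and r ≥ 3, then for each k with 1 ≤ k ≤ r − 2 and for k = r, the family J^(k) contains two disjoint members A and B with |A| = a and |B| = b. -/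
/-! Call a coordinate `i` of `Fin r` free if `k ≤ i`. A proper subset of `[r]` whose complement
does not contain exactly one free coordinate lies in `J^(k)`: it is the intersection of the
generators containing it, because a fixed coordinate is removed by `[r] \ {i}` and a free one
together with a second free one by an `(r-2)`-set. So it is enough to split `[r]` into parts of
sizes `a` and `b` neither of which contains exactly one of the `r - k` free coordinates, and such
a split exists except when `(r,a,b,k) = (4,2,2,1)`. -/

open Finset

theorem Finset.inf_filter_superset_eq {α : Type*} [Fintype α] [DecidableEq α]
    (𝒢 : Finset (Finset α)) {T : Finset α} (h : ∀ x ∉ T, ∃ g ∈ 𝒢, T ⊆ g ∧ x ∉ g) :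
    (𝒢.filter (T ⊆ ·)).inf id = T := by
  refine le_antisymm (fun x hx => ?_) (Finset.le_inf fun g hg => (mem_filter.1 hg).2)
  by_contra hxT
  obtain ⟨g, hg, hTg, hxg⟩ := h x hxT
  exact hxg (inf_le (f := id) (mem_filter.2 ⟨hg, hTg⟩) hx)

theorem Finset.exists_card_filter_eq {α : Type*} [Fintype α] [DecidableEq α]
    (p : α → Prop) [DecidablePred p] {m n : ℕ}
    (hm : m ≤ #(univ.filter p)) (hn : n ≤ #(univ.filter fun x => ¬ p x)) :
    ∃ S : Finset α, #S = m + n ∧ #(S.filter p) = m ∧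
      #(Sᶜ.filter p) = #(univ.filter p) - m := by
  obtain ⟨P, hP, hPm⟩ := exists_subset_card_eq hm
  obtain ⟨Q, hQ, hQn⟩ := exists_subset_card_eq hn
  have hPp : ∀ x ∈ P, p x := fun x hx => (mem_filter.1 (hP hx)).2
  have hQp : ∀ x ∈ Q, ¬ p x := fun x hx => (mem_filter.1 (hQ hx)).2
  have hfilter : (P ∪ Q).filter p = P := by
    rw [filter_union, filter_true_of_mem hPp, filter_false_of_mem hQp, union_empty]
  have hcompl : (P ∪ Q)ᶜ.filter p = univ.filter p \ P := by
    ext x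
    simp only [mem_filter, mem_compl, mem_union, mem_sdiff, mem_univ, true_and]
    have := hQp x
    tauto
  refine ⟨P ∪ Q, ?_, by rw [hfilter, hPm], ?_⟩
  · rw [card_union_of_disjoint (disjoint_left.2 fun x hxP hxQ => hQp x hxQ (hPp x hxP)), hPm, hQn]
  · rw [hcompl, card_sdiff_of_subset hP, hPm]

section

variable {r k : ℕ}

theorem erase_mem_JkGens {i : Fin r} (hi : (i : ℕ) < k) : univ.erase i ∈ JkGens r k :=
  mem_union_left _ (mem_image.2 ⟨i, mem_filter.2 ⟨mem_univ i, hi⟩, rfl⟩)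

theorem compl_pair_mem_JkGens {x y : Fin r} (hxy : x ≠ y) (hx : k ≤ (x : ℕ)) (hy : k ≤ (y : ℕ)) :
    {x, y}ᶜ ∈ JkGens r k := by
  refine mem_union_right _ (mem_filter.2 ⟨mem_powersetCard.2 ⟨subset_univ _, ?_⟩, ?_⟩)
  · rw [card_compl, Fintype.card_fin, card_pair hxy]
  · intro i hi
    simp only [mem_compl, mem_insert, mem_singleton, not_or]
    exact ⟨fun h => by subst h; omega, fun h => by subst h; omega⟩

theorem mem_Jk_of_forall_notMem {T : Finset (Fin r)} (hT : T ≠ univ)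
    (h : ∀ x ∉ T, ∃ g ∈ JkGens r k, T ⊆ g ∧ x ∉ g) : T ∈ Jk r k := by
  obtain ⟨x, hx⟩ := not_forall.1 (mt eq_univ_iff_forall.2 hT)
  obtain ⟨g, hg, hTg, -⟩ := h x hx
  refine mem_image.2 ⟨(JkGens r k).filter (T ⊆ ·), mem_filter.2 ⟨?_, ?_⟩,
    inf_filter_superset_eq _ h⟩
  · exact mem_powerset.2 (filter_subset _ _)
  · exact ⟨g, mem_filter.2 ⟨hg, hTg⟩⟩

theorem compl_mem_Jk {S : Finset (Fin r)} (hS : S.Nonempty)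
    (hfree : #(S.filter fun i : Fin r => k ≤ (i : ℕ)) ≠ 1) : Sᶜ ∈ Jk r k := by
  refine mem_Jk_of_forall_notMem (compl_ne_univ_iff_nonempty S |>.2 hS) fun x hx => ?_
  rw [notMem_compl] at hx
  by_cases hxk : (x : ℕ) < k
  · refine ⟨univ.erase x, erase_mem_JkGens hxk, fun y hy => mem_erase.2 ⟨?_, mem_univ y⟩,
      notMem_erase x univ⟩
    rintro rfl
    exact mem_compl.1 hy hx
  · have hxfree : x ∈ S.filter fun i : Fin r => k ≤ (i : ℕ) := mem_filter.2 ⟨hx, by omega⟩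
    obtain ⟨y, hy, hyx⟩ := exists_mem_ne (lt_of_le_of_ne (card_pos.2 ⟨x, hxfree⟩) hfree.symm) x
    refine ⟨{x, y}ᶜ, compl_pair_mem_JkGens (Ne.symm hyx) (by omega) (mem_filter.1 hy).2,
      compl_subset_compl.2 ?_, by simp⟩
    exact insert_subset hx (singleton_subset_iff.2 (mem_filter.1 hy).1)

-- `y` and `z` count the free coordinates in `B` and in `A`.
theorem exists_disjoint_mem_Jk {a b k y z : ℕ} (ha : 0 < a) (hb : 0 < b) (hy : y ≤ b)
    (hz : z ≤ a) (hsum : y + z + k = a + b) (hy1 : y ≠ 1) (hz1 : z ≠ 1) :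
    ∃ A ∈ Jk (a + b) k, ∃ B ∈ Jk (a + b) k, Disjoint A B ∧ #A = a ∧ #B = b := by
  have hfixed : #(univ.filter fun i : Fin (a + b) => ¬ k ≤ (i : ℕ)) = k := by
    simp only [not_le, Fin.card_filter_val_lt]
    omega
  have hfree : #(univ.filter fun i : Fin (a + b) => k ≤ (i : ℕ)) = y + z := by
    have := card_filter_add_card_filter_not (s := univ) fun i : Fin (a + b) => k ≤ (i : ℕ)
    rw [hfixed, card_univ, Fintype.card_fin] at this
    omega
  obtain ⟨S, hS, hSy, hScz⟩ :=
    exists_card_filter_eq (fun i : Fin (a + b) => k ≤ (i : ℕ)) (m := y) (n := b - y)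
      (by omega) (by omega)
  have hScard : #Sᶜ = a := by rw [card_compl, Fintype.card_fin, hS]; omega
  refine ⟨Sᶜ, compl_mem_Jk (card_pos.1 (by omega)) (by omega), S, ?_, disjoint_compl_left,
    hScard, by omega⟩
  have hB := compl_mem_Jk (k := k) (card_pos.1 (by omega : 0 < #Sᶜ)) (by omega)
  rwa [compl_compl] at hB

end

/-- Lemma 3.3: (i) if `2 ≤ a, b ≤ r - 2` (`a + b = r`), then for every `k` with `k ≤ r - 2`
or `k = r`, the family `J^(k)` has disjoint members of sizes `a` and `b` unless
`(r,a,b,k) = (4,2,2,1)`; (ii) if `(a,b) = (1,r-1)` or `(r-1,1)` and `r ≥ 3`, the same holds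
for every `k` with `1 ≤ k ≤ r - 2` or `k = r`. -/
theorem Jk_disjoint_members (a b r : ℕ) (hr : r = a + b) :
    ((2 ≤ a ∧ 2 ≤ b ∧ a ≤ r - 2 ∧ b ≤ r - 2) →
      ∀ k : ℕ, (k ≤ r - 2 ∨ k = r) → ¬ (r = 4 ∧ a = 2 ∧ b = 2 ∧ k = 1) →
        ∃ A ∈ Jk r k, ∃ B ∈ Jk r k, Disjoint A B ∧ A.card = a ∧ B.card = b) ∧
    ((((a = 1 ∧ b = r - 1) ∨ (a = r - 1 ∧ b = 1)) ∧ 3 ≤ r) →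
      ∀ k : ℕ, 1 ≤ k → (k ≤ r - 2 ∨ k = r) →
        ∃ A ∈ Jk r k, ∃ B ∈ Jk r k, Disjoint A B ∧ A.card = a ∧ B.card = b) := by
  subst hr
  refine ⟨fun ⟨ha, hb, _, _⟩ k hk hexc => ?_, fun ⟨hab, _⟩ k hk1 hk => ?_⟩
  · obtain ⟨y, z, hy, hz, hsum, hy1, hz1⟩ :
        ∃ y z, y ≤ b ∧ z ≤ a ∧ y + z + k = a + b ∧ y ≠ 1 ∧ z ≠ 1 := by
      rcases hk with hk | rfl
      · by_cases hfit : a + b - k ≤ b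
        · exact ⟨a + b - k, 0, by omega⟩
        by_cases hover : a + b - k = b + 1
        · by_cases hb2 : b = 2
          · exact ⟨0, 3, by omega⟩
          · exact ⟨b - 1, 2, by omega⟩
        · exact ⟨b, a - k, by omega⟩
      · exact ⟨0, 0, by omega⟩
    exact exists_disjoint_mem_Jk (by omega) (by omega) hy hz hsum hy1 hz1
  · obtain ⟨y, z, hy, hz, hsum, hy1, hz1⟩ :
        ∃ y z, y ≤ b ∧ z ≤ a ∧ y + z + k = a + b ∧ y ≠ 1 ∧ z ≠ 1 := by
      rcases hab with hab | hab
      · exact ⟨a + b - k, 0, by omega⟩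
      · exact ⟨0, a + b - k, by omega⟩
    exact exists_disjoint_mem_Jk (by omega) (by omega) hy hz hsum hy1 hz1
end

section
/- Let a, b ≥ 2 with r = a + b ≥ 5, and let s, h be positive integers. Let H be an r-graph on [n] containing no bush B_{s,h}(a,b). Suppose H_1,…,H_m are pairwise disjoint subfamilies of H such that for each i: H_i is r-partite with some partition (X_1^i,…,X_r^i) of [n]; there is a family J_i of proper subsets of [r] with Π_i(I(E, H_i)) = J_i for every E ∈ H_i; J_i is closed under intersection and contains the set [r]\{j} for every 1 ≤ j ≤ r − 1; and for every E ∈ H_i and every P ∈ J_i, the subset of E consisting of its vertices in the parts X_j^i with j ∈ P is the kernel of an (s·h·r)-star in H_i. For E ∈ H_i let c(E) denote the unique vertex of E lying in X_r^i. Then for every set Y ⊆ [n] with a ≤ |Y| ≤ r − 1, the number of vertices v ∈ [n] \ Y for which there exist an index i and an edge E ∈ H_i with Y ⊆ E and c(E) = v is at most s − 1. -/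
/-!
Suppose there were `s` such centers `v k`, with edges `E k ⊇ Y` of `𝓗 (i k)` whose vertex in
the last part is `v k`, and fix `A ⊆ Y` with `|A| = a`. A proper subset of an edge that meets the
last part has a pattern which is an intersection of sets `[r] \ {j}` with `j ≠ r`, so it lies in
`J` and the subset is the kernel of a large star. Choosing greedily, for each `k`, a member `F k`
of the star with kernel `insert (v k) A` whose petal avoids the other petals and all centers gives
pairwise disjoint `b`-sets `B k = F k \ A ∋ v k`. Each `B k` is again such a kernel, and choosing
`h` petals of each of these stars greedily, disjoint from each other, from `A` and from the other
`B k'`, produces the bush `B_{s,h}(a,b)`.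
-/

open Finset Function

section Star

variable {α : Type*} [DecidableEq α]

def IsStar (K : Finset α) (S : Finset (Finset α)) : Prop :=
  (S : Set (Finset α)).Pairwise fun F G => F ∩ G = K

namespace IsStar

variable {K U : Finset α} {S : Finset (Finset α)}

theorem subset_of_mem (hS : IsStar K S) (hcard : 1 < #S) {F : Finset α} (hF : F ∈ S) :
    K ⊆ F := by
  obtain ⟨G, hG, hGF⟩ := exists_mem_ne hcard F
  exact hS hG hF hGF ▸ inter_subset_right

theorem disjoint_sdiff_sdiff (hS : IsStar K S) {F G : Finset α} (hF : F ∈ S) (hG : G ∈ S)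
    (hFG : F ≠ G) : Disjoint (F \ K) (G \ K) := by
  rw [← hS hF hG hFG, disjoint_left]
  intro x hxF hxG
  exact (mem_sdiff.1 hxF).2 (mem_inter.2 ⟨(mem_sdiff.1 hxF).1, (mem_sdiff.1 hxG).1⟩)

theorem exists_sdiff_disjoint (hS : IsStar K S) (hU : #U < #S) :
    ∃ F ∈ S, Disjoint (F \ K) U := by
  by_contra! h
  refine hU.not_ge (card_le_card_of_forall_subsingleton (fun F x => x ∈ F \ K)
    (fun F hF => ?_) fun x _ F hF G hG => ?_)
  · obtain ⟨x, hxF, hxU⟩ := not_disjoint_iff.1 (h F hF)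
    exact ⟨x, hxU, hxF⟩
  · by_contra hFG
    exact disjoint_left.1 (hS.disjoint_sdiff_sdiff hF.1 hG.1 hFG) hF.2 hG.2

end IsStar

/-- Greedy choice: each new petal only has to avoid `W t` and the at most `(#T - 1) * M` points
of the petals chosen before it. -/
theorem exists_pairwiseDisjoint_sdiff {ι : Type*} [DecidableEq ι] (T : Finset ι)
    {K W : ι → Finset α} {S : ι → Finset (Finset α)} {M : ℕ}
    (hS : ∀ t, IsStar (K t) (S t)) (hM : ∀ t, ∀ F ∈ S t, #(F \ K t) ≤ M)
    (hcard : ∀ t, #(W t) + (#T - 1) * M < #(S t)) :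
    ∃ F : ι → Finset α, (∀ t ∈ T, F t ∈ S t ∧ Disjoint (F t \ K t) (W t)) ∧
      (T : Set ι).PairwiseDisjoint fun t => F t \ K t := by
  induction T using Finset.induction with
  | empty => exact ⟨fun _ => ∅, by simp, by simp⟩
  | @insert a T ha ih =>
    rw [card_insert_of_notMem ha, Nat.add_sub_cancel] at hcard
    obtain ⟨F, hF, hFdisj⟩ := ih fun t => lt_of_le_of_lt (by gcongr; omega) (hcard t)
    set U := W a ∪ T.biUnion fun t => F t \ K t
    have hU : #U < #(S a) := calc
      #U ≤ #(W a) + #T * M := (card_union_le _ _).trans <| Nat.add_le_add_left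
        (card_biUnion_le_card_mul _ _ _ fun t ht => hM t _ (hF t ht).1) _
      _ < #(S a) := hcard a
    obtain ⟨G, hGS, hGU⟩ := (hS a).exists_sdiff_disjoint hU
    have hupdate : ∀ t ∈ T, update F a G t = F t := fun t ht =>
      update_of_ne (ne_of_mem_of_not_mem ht ha) _ _
    refine ⟨update F a G, fun t ht => ?_, ?_⟩
    · rcases mem_insert.1 ht with rfl | ht
      · simp only [update_self]
        exact ⟨hGS, disjoint_union_right.1 hGU |>.1⟩
      · rw [hupdate t ht]
        exact hF t ht
    · rw [coe_insert, Set.pairwiseDisjoint_insert_of_notMem (mem_coe.not.2 ha)]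
      refine ⟨fun t ht t' ht' htt' => ?_, fun t ht => ?_⟩
      · simp only [onFun, hupdate t ht, hupdate t' ht']
        exact hFdisj ht ht' htt'
      · simp only [update_self, hupdate t ht]
        exact (disjoint_union_right.1 hGU).2.mono_right
          (subset_biUnion_of_mem (fun t => F t \ K t) ht)

end Star

theorem isKernelOf_iff {q : ℕ} {𝓕 : Finset (Finset ℕ)} {K : Finset ℕ} :
    IsKernelOf q 𝓕 K ↔ ∃ S ⊆ 𝓕, #S = q ∧ IsStar K S :=
  Iff.rfl

theorem IsKernelOf.mono {q : ℕ} {𝓕 𝓖 : Finset (Finset ℕ)} {K : Finset ℕ} (h : 𝓕 ⊆ 𝓖)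
    (hK : IsKernelOf q 𝓕 K) : IsKernelOf q 𝓖 K :=
  let ⟨S, hS, hSK⟩ := hK
  ⟨S, hS.trans h, hSK⟩

section Partite

variable {r : ℕ} {X : Fin r → Finset ℕ} {e S : Finset ℕ}

theorem filter_mem_pattern_eq (hcov : e ⊆ univ.biUnion X) (hpart : ∀ j, #(e ∩ X j) = 1)
    (hS : S ⊆ e) : (e.filter fun x => ∃ j ∈ pattern X S, x ∈ X j) = S := by
  ext x
  simp only [mem_filter, pattern, mem_univ, true_and]
  constructor
  · rintro ⟨hxe, j, ⟨y, hy⟩, hxj⟩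
    obtain ⟨z, hz⟩ := card_eq_one.1 (hpart j)
    have hx : x ∈ e ∩ X j := mem_inter.2 ⟨hxe, hxj⟩
    have hy' : y ∈ e ∩ X j := mem_inter.2 ⟨hS (mem_inter.1 hy).1, (mem_inter.1 hy).2⟩
    rw [hz, mem_singleton] at hx hy'
    exact hx ▸ hy' ▸ (mem_inter.1 hy).1
  · intro hxS
    obtain ⟨j, -, hxj⟩ := mem_biUnion.1 (hcov (hS hxS))
    exact ⟨hS hxS, j, ⟨x, mem_inter.2 ⟨hxS, hxj⟩⟩, hxj⟩

theorem pattern_ne_univ (hcov : e ⊆ univ.biUnion X) (hpart : ∀ j, #(e ∩ X j) = 1)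
    (hS : S ⊆ e) (hne : S ≠ e) : pattern X S ≠ univ := by
  intro h
  apply hne
  rw [← filter_mem_pattern_eq hcov hpart hS, h, filter_eq_self]
  exact fun x hx => by simpa using hcov hx

end Partite

theorem mem_of_forall_erase_mem {β : Type*} [Fintype β] [DecidableEq β]
    {J : Finset (Finset β)} (hJ : ∀ A ∈ J, ∀ B ∈ J, A ∩ B ∈ J) {P : Finset β} (hP : P ≠ univ)
    (herase : ∀ j ∉ P, univ.erase j ∈ J) : P ∈ J := by
  have hne : (univ \ P).Nonempty := by
    rwa [sdiff_nonempty, univ_subset_iff]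
  have hP : (univ \ P).inf' hne (univ.erase ·) = P := by
    ext x
    simp [mem_inf', not_imp_comm]
  rw [← hP]
  exact inf'_induction hne _ hJ fun j hj => herase j (mem_sdiff.1 hj).2

theorem isKernelOf_of_mem_last_part {q r : ℕ} {𝓕 : Finset (Finset ℕ)}
    {X : Fin r → Finset ℕ} {J : Finset (Finset (Fin r))} {last : Fin r}
    (hJ : ∀ A ∈ J, ∀ B ∈ J, A ∩ B ∈ J) (herase : ∀ j ≠ last, univ.erase j ∈ J)
    (hker : ∀ e ∈ 𝓕, ∀ P ∈ J, IsKernelOf q 𝓕 (e.filter fun x => ∃ j ∈ P, x ∈ X j))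
    {e S : Finset ℕ} (he : e ∈ 𝓕) (hcov : e ⊆ univ.biUnion X)
    (hpart : ∀ j, #(e ∩ X j) = 1) (hS : S ⊆ e) (hne : S ≠ e) {x : ℕ} (hxS : x ∈ S)
    (hx : x ∈ X last) : IsKernelOf q 𝓕 S := by
  rw [← filter_mem_pattern_eq hcov hpart hS]
  refine hker e he _ (mem_of_forall_erase_mem hJ (pattern_ne_univ hcov hpart hS hne)
    fun j hj => herase j ?_)
  rintro rfl
  exact hj (mem_filter.2 ⟨mem_univ _, x, mem_inter.2 ⟨hxS, hx⟩⟩)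

theorem Set.exists_injective_fin_of_le_ncard {α : Type*} {S : Set α} {s : ℕ} (hS : S.Finite)
    (h : s ≤ S.ncard) : ∃ v : Fin s → α, Injective v ∧ ∀ k, v k ∈ S := by
  have := hS.to_subtype
  rw [← Nat.card_coe_set_eq] at h
  let e : Fin s ↪ S := (Fin.castLEEmb h).trans (Finite.equivFin S).symm.toEmbedding
  exact ⟨fun k => e k, fun k k' hkk' => e.injective (Subtype.ext hkk'), fun k => (e k).2⟩

theorem exists_pairwise_disjoint_branches {a b s q : ℕ} (hb : 0 < b) (hq : s * (b + 1) ≤ q)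
    {𝓕 : Fin s → Finset (Finset ℕ)} (h𝓕 : ∀ k, ∀ F ∈ 𝓕 k, #F = a + b)
    {A : Finset ℕ} (hA : #A = a) {v : Fin s → ℕ} (hv : Injective v)
    (hvA : ∀ k, v k ∉ A) (hker : ∀ k, IsKernelOf q (𝓕 k) (insert (v k) A)) :
    ∃ B : Fin s → Finset ℕ, Pairwise (Disjoint on B) ∧
      ∀ k, #(B k) = b ∧ Disjoint A (B k) ∧ v k ∈ B k ∧ A ∪ B k ∈ 𝓕 k := by
  choose S hS𝓕 hScard hS using fun k => isKernelOf_iff.1 (hker k)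
  have hsub : ∀ k, ∀ F ∈ S k, insert (v k) A ⊆ F := fun k _ =>
    (hS k).subset_of_mem (by have := k.pos; rw [hScard]; nlinarith)
  obtain ⟨F, hF, hFdisj⟩ := exists_pairwiseDisjoint_sdiff univ (W := fun _ => univ.image v)
    (M := b - 1) hS
    (fun k F hF => by
      rw [card_sdiff_of_subset (hsub k F hF), h𝓕 k F (hS𝓕 k hF), card_insert_of_notMem (hvA k), hA]
      omega)
    (fun k => by
      have hs := k.pos
      have hv : #(univ.image v) ≤ s := card_image_le.trans (by simp)
      rw [hScard, card_univ, Fintype.card_fin]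
      nlinarith [Nat.sub_one_mul s (b - 1), Nat.mul_sub_one (s - 1) b, Nat.sub_add_cancel hs,
        Nat.sub_add_cancel hb])
  have hFS : ∀ k, F k ∈ S k := fun k => (hF k (mem_univ k)).1
  have hAF : ∀ k, A ⊆ F k := fun k => (subset_insert _ _).trans (hsub k _ (hFS k))
  have hvP : ∀ k k', v k ∉ F k' \ insert (v k') A := fun k k' hk =>
    disjoint_left.1 (hF k' (mem_univ k')).2 hk (mem_image_of_mem v (mem_univ k))
  refine ⟨fun k => F k \ A, fun k k' hkk' => ?_, fun k => ⟨?_, disjoint_sdiff, ?_, ?_⟩⟩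
  · have hsplit : ∀ k, F k \ A ⊆ insert (v k) (F k \ insert (v k) A) := fun k => by
      rw [sdiff_insert]
      exact insert_erase_subset _ _
    refine (Disjoint.mono (hsplit k) (hsplit k')) ?_
    simp only [disjoint_insert_left, disjoint_insert_right, mem_insert, not_or]
    exact ⟨⟨hv.ne hkk'.symm, hvP k' k⟩, hvP k k',
      hFdisj (mem_coe.2 (mem_univ k)) (mem_coe.2 (mem_univ k')) hkk'⟩
  · rw [card_sdiff_of_subset (hAF k), h𝓕 k _ (hS𝓕 k (hFS k)), hA]
    omega
  · exact mem_sdiff.2 ⟨hsub k _ (hFS k) (mem_insert_self _ _), hvA k⟩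
  · rw [union_sdiff_of_subset (hAF k)]
    exact hS𝓕 k (hFS k)

theorem containsBush_of_isKernelOf {a b s h q : ℕ} (ha : 0 < a) (hb : 0 < b)
    (hq : s * h * (a + b) ≤ q) {H : Finset (Finset ℕ)} (hH : ∀ F ∈ H, #F = a + b)
    {A : Finset ℕ} (hA : #A = a) {B : Fin s → Finset ℕ} (hB : Pairwise (Disjoint on B))
    (hBb : ∀ k, #(B k) = b) (hAB : ∀ k, Disjoint A (B k)) (hABH : ∀ k, A ∪ B k ∈ H)
    (hker : ∀ k, IsKernelOf q H (B k)) : ContainsBush a b s h H := by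
  choose S hSH hScard hS using fun k => isKernelOf_iff.1 (hker k)
  have hsub : ∀ p : Fin s × Fin h, ∀ G ∈ S p.1, B p.1 ⊆ G := fun p _ =>
    (hS p.1).subset_of_mem (by have := Nat.mul_pos p.1.pos p.2.pos; rw [hScard]; nlinarith)
  obtain ⟨G, hG, hGdisj⟩ := exists_pairwiseDisjoint_sdiff univ (S := fun p : Fin s × Fin h => S p.1)
    (W := fun p => A ∪ (univ.erase p.1).biUnion B) (M := a) (fun p => hS p.1)
    (fun p G hG => by
      rw [card_sdiff_of_subset (hsub p G hG), hH G (hSH p.1 hG), hBb]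
      omega)
    (fun p => by
      have hs := p.1.pos
      have hW : #(A ∪ (univ.erase p.1).biUnion B) ≤ a + (s - 1) * b := by
        refine (card_union_le _ _).trans (hA ▸ Nat.add_le_add_left ?_ _)
        simpa using card_biUnion_le_card_mul (univ.erase p.1) B b fun k _ => (hBb k).le
      have hsh : s * b ≤ s * h * b := Nat.mul_le_mul_right b (Nat.le_mul_of_pos_right s p.2.pos)
      have := Nat.mul_pos hs p.2.pos
      rw [hScard, card_univ, Fintype.card_prod, Fintype.card_fin, Fintype.card_fin]
      zify [this, hs] at *
      nlinarith)
  have hGS : ∀ p, G p ∈ S p.1 := fun p => (hG p (mem_univ p)).1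
  have hGW : ∀ p, Disjoint (G p \ B p.1) (A ∪ (univ.erase p.1).biUnion B) :=
    fun p => (hG p (mem_univ p)).2
  refine ⟨A, B, fun k j => G (k, j) \ B k, hA, hBb, fun k j => ?_, hAB,
    fun k j => (disjoint_union_right.1 (hGW (k, j))).1.symm, fun k k' hkk' => hB hkk',
    fun k j k' j' hne => hGdisj (mem_coe.2 (mem_univ _)) (mem_coe.2 (mem_univ _)) hne,
    fun k k' j => ?_, hABH, fun k j => ?_⟩
  · rw [card_sdiff_of_subset (hsub (k, j) _ (hGS (k, j))), hH _ (hSH k (hGS (k, j))), hBb]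
    omega
  · rcases eq_or_ne k k' with rfl | hkk'
    · exact disjoint_sdiff
    · exact (disjoint_union_right.1 (hGW (k', j))).2.symm.mono_left
        (subset_biUnion_of_mem B (mem_erase.2 ⟨hkk', mem_univ k⟩))
  · rw [union_sdiff_of_subset (hsub (k, j) _ (hGS (k, j)))]
    exact hSH k (hGS (k, j))

/-- Claim 4.3 (combining Claims 4.2 and 4.3): in the setting of the basic procedure with
`a, b ≥ 2`, `r = a + b ≥ 5`, for every set `Y` with `a ≤ |Y| ≤ r - 1` the number of
vertices `v ∉ Y` that occur as `v = c(E)` (the vertex of `E` in the last part of its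
partition) for some edge `E ⊇ Y` of some `𝓗 i` is at most `s - 1`. -/
theorem few_centers (a b s h r n m : ℕ) (ha : 2 ≤ a) (hb : 2 ≤ b) (hh : 0 < h)
    (hr : r = a + b)
    (H : Finset (Finset ℕ)) (hH : ∀ e ∈ H, e ⊆ Finset.Icc 1 n ∧ e.card = r)
    (hbush : ¬ ContainsBush a b s h H)
    (𝓗 : Fin m → Finset (Finset ℕ)) (hsub : ∀ i, 𝓗 i ⊆ H)
    (X : Fin m → Fin r → Finset ℕ) (hpart : ∀ i, IsPartitionOf n r (X i))
    (hpartite : ∀ i, ∀ e ∈ 𝓗 i, ∀ j, (e ∩ X i j).card = 1)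
    (J : Fin m → Finset (Finset (Fin r)))
    (hinter : ∀ i, ∀ A ∈ J i, ∀ B ∈ J i, A ∩ B ∈ J i)
    (hbig : ∀ i, ∀ j : Fin r, (j : ℕ) < r - 1 → Finset.univ.erase j ∈ J i)
    (hker : ∀ i, ∀ e ∈ 𝓗 i, ∀ P ∈ J i,
      IsKernelOf (s * h * r) (𝓗 i) (e.filter fun x => ∃ j ∈ P, x ∈ X i j))
    (Y : Finset ℕ) (hYlb : a ≤ Y.card) :
    {v : ℕ | v ∈ Finset.Icc 1 n ∧ v ∉ Y ∧
        ∃ i, ∃ e ∈ 𝓗 i, Y ⊆ e ∧ e ∩ X i ⟨r - 1, by omega⟩ = {v}}.ncard ≤ s - 1 := by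
  subst hr
  set last : Fin (a + b) := ⟨a + b - 1, by omega⟩
  by_contra! hcenters
  obtain ⟨v, hv, hvc⟩ := Set.exists_injective_fin_of_le_ncard
    (Set.finite_of_ncard_pos (Nat.zero_lt_of_lt hcenters)) (Nat.le_of_pred_lt hcenters)
  choose i E hE hYE hEv using fun k => (hvc k).2.2
  have hvE : ∀ k, v k ∈ E k ∧ v k ∈ X (i k) last := fun k =>
    mem_inter.1 (hEv k ▸ mem_singleton_self _)
  obtain ⟨A, hAY, hA⟩ := exists_subset_card_eq hYlb
  have hvA : ∀ k, v k ∉ A := fun k hk => (hvc k).2.1 (hAY hk)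
  have hcard : ∀ i, ∀ e ∈ 𝓗 i, #e = a + b := fun i e he => (hH e (hsub i he)).2
  have hkernel : ∀ i, ∀ e ∈ 𝓗 i, ∀ S ⊆ e, #S < a + b → ∀ x ∈ S, x ∈ X i last →
      IsKernelOf (s * h * (a + b)) (𝓗 i) S := fun i e he S hS hSlt x hxS hx =>
    isKernelOf_of_mem_last_part (hinter i)
      (fun j hj => hbig i j (lt_of_le_of_ne (Nat.le_sub_one_of_lt j.isLt) (Fin.val_ne_iff.2 hj)))
      (hker i) he ((hH e (hsub i he)).1.trans (hpart i).2.ge) (hpartite i e he) hS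
      (ne_of_apply_ne card (hSlt.trans_eq (hcard i e he).symm).ne) hxS hx
  obtain ⟨B, hBdisj, hB⟩ := exists_pairwise_disjoint_branches (𝓕 := fun k => 𝓗 (i k))
    (by omega) (Nat.mul_le_mul (Nat.le_mul_of_pos_right s hh) (by omega))
    (fun k => hcard (i k)) hA hv hvA fun k =>
      hkernel _ _ (hE k) _ (insert_subset (hvE k).1 (hAY.trans (hYE k)))
        (by rw [card_insert_of_notMem (hvA k), hA]; omega) _ (mem_insert_self _ _) (hvE k).2
  choose hBb hAB hvB hAB𝓗 using hB
  exact hbush (containsBush_of_isKernelOf (by omega) (by omega) le_rfl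
    (fun F hF => (hH F hF).2) hA hBdisj hBb hAB (fun k => hsub _ (hAB𝓗 k)) fun k =>
      (hkernel _ _ (hAB𝓗 k) _ subset_union_right (by rw [hBb k]; omega) _ (hvB k)
        (hvE k).2).mono (hsub _))
end

section
/- Let s be a positive integer, V a finite set, u ∈ V, and let P be a finite family of finite subsets of V, each containing u, such that P_1 ∩ P_2 = {u} for all distinct P_1, P_2 ∈ P (P is a star with kernel {u}). Suppose that to each P ∈ P a set Q′(P) ⊆ V is assigned with |Q′(P)| ≤ s and Q′(P) ∩ P = ∅. Then there exists a subfamily P′ ⊆ P with |P′| ≥ |P| / (2s + 1) that is separable, i.e., (⋃_{P∈P′} Q′(P)) ∩ (⋃_{P∈P′} P) = ∅. -/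
/-!
Join `P₁ → P₂` whenever `Q' P₁` meets `P₂`. Since `P₁ ∩ P₂ = {u}` and `u ∉ Q' P₁`, distinct
targets `P₂` meet `Q' P₁` in disjoint sets, so every out-degree is at most `s`. A digraph of
maximum out-degree `s` has average total degree at most `2s`, so greedily picking a vertex of
total degree at most `2s` and discarding its neighbours yields an independent set of size at
least `|𝓟| / (2s + 1)`, and an independent set is exactly a separable subfamily.
-/

open Finset

section IndependentSet

variable {α : Type*} [DecidableEq α] (N : α → α → Prop) [DecidableRel N] {s : ℕ}

theorem exists_card_filter_or_le_of_outdegree_le {A : Finset α} (hA : A.Nonempty)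
    (hdeg : ∀ a ∈ A, #{b ∈ A | N a b} ≤ s) :
    ∃ a ∈ A, #{b ∈ A | N a b ∨ N b a} ≤ 2 * s := by
  have hout : ∑ a ∈ A, #{b ∈ A | N a b} ≤ ∑ _a ∈ A, s := sum_le_sum hdeg
  have hin : ∑ a ∈ A, #{b ∈ A | N b a} = ∑ a ∈ A, #{b ∈ A | N a b} :=
    (sum_card_bipartiteAbove_eq_sum_card_bipartiteBelow (fun b a => N a b)).trans rfl
  refine exists_le_of_sum_le hA ?_
  calc ∑ a ∈ A, #{b ∈ A | N a b ∨ N b a}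
      ≤ ∑ a ∈ A, (#{b ∈ A | N a b} + #{b ∈ A | N b a}) :=
        sum_le_sum fun a _ => (card_le_card (filter_or ..).le).trans (card_union_le _ _)
    _ = 2 * ∑ a ∈ A, #{b ∈ A | N a b} := by rw [sum_add_distrib, hin, two_mul]
    _ ≤ ∑ _a ∈ A, 2 * s := by
        rw [← mul_sum]
        exact Nat.mul_le_mul_left 2 hout

theorem exists_pairwise_not_rel_card_le_of_outdegree_le (A : Finset α)
    (hdeg : ∀ a ∈ A, #{b ∈ A | N a b} ≤ s) :
    ∃ I ⊆ A, #A ≤ #I * (2 * s + 1) ∧ (I : Set α).Pairwise fun a b => ¬N a b := by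
  induction A using Finset.strongInduction with
  | H A ih =>
    rcases A.eq_empty_or_nonempty with rfl | hA
    · exact ⟨∅, empty_subset _, by simp, by simp⟩
    obtain ⟨a, haA, ha⟩ := exists_card_filter_or_le_of_outdegree_le N hA hdeg
    set S := insert a {b ∈ A | N a b ∨ N b a}
    have haS : a ∈ S := mem_insert_self _ _
    have hA' : A \ S ⊂ A := sdiff_ssubset (insert_subset haA (filter_subset _ _)) ⟨a, haS⟩
    obtain ⟨I, hIA', hIcard, hI⟩ := ih (A \ S) hA' fun b hb =>
      (card_le_card (filter_subset_filter _ hA'.subset)).trans (hdeg b (hA'.subset hb))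
    have haI : a ∉ I := fun h => (mem_sdiff.mp (hIA' h)).2 haS
    refine ⟨insert a I, insert_subset haA (hIA'.trans hA'.subset), ?_, ?_⟩
    · have hS : #S ≤ 2 * s + 1 := (card_insert_le _ _).trans (by omega)
      have hsplit : #A ≤ #(A \ S) + #S := card_le_card_sdiff_add_card
      rw [card_insert_of_notMem haI]
      nlinarith
    · rw [coe_insert, Set.pairwise_insert]
      refine ⟨hI, fun b hb _ => ?_⟩
      have hbS : b ∉ S := (mem_sdiff.mp (hIA' hb)).2
      have hbA : b ∈ A := (mem_sdiff.mp (hIA' hb)).1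
      simp only [S, mem_insert, mem_filter, not_or] at hbS
      exact ⟨fun h => hbS.2 ⟨hbA, Or.inl h⟩, fun h => hbS.2 ⟨hbA, Or.inr h⟩⟩

end IndependentSet

theorem card_filter_not_disjoint_le_s13 {α : Type*} [DecidableEq α] {𝓟 : Finset (Finset α)}
    {K Q : Finset α} (hK : ∀ P₁ ∈ 𝓟, ∀ P₂ ∈ 𝓟, P₁ ≠ P₂ → P₁ ∩ P₂ ⊆ K) (hQ : Disjoint Q K) :
    #{P ∈ 𝓟 | ¬Disjoint Q P} ≤ #Q := by
  set F := {P ∈ 𝓟 | ¬Disjoint Q P}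
  have hdisj : (F : Set (Finset α)).PairwiseDisjoint (Q ∩ ·) := by
    intro P₁ hP₁ P₂ hP₂ hne
    have hsub := hK P₁ (mem_filter.mp hP₁).1 P₂ (mem_filter.mp hP₂).1 hne
    refine disjoint_left.mpr fun v hv₁ hv₂ => disjoint_left.mp hQ (mem_inter.mp hv₁).1 ?_
    exact hsub (mem_inter.mpr ⟨(mem_inter.mp hv₁).2, (mem_inter.mp hv₂).2⟩)
  calc #F = ∑ _P ∈ F, 1 := card_eq_sum_ones F
    _ ≤ ∑ P ∈ F, #(Q ∩ P) := sum_le_sum fun P hP =>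
        card_pos.mpr (not_disjoint_iff_nonempty_inter.mp (mem_filter.mp hP).2)
    _ = #(F.biUnion (Q ∩ ·)) := (card_biUnion hdisj).symm
    _ ≤ #Q := card_le_card (biUnion_subset.mpr fun _ _ => inter_subset_left)

theorem separable_subfamily_general {V : Type*} [DecidableEq V]
    (s : ℕ) (u : V)
    (𝓟 : Finset (Finset V)) (hu : ∀ P ∈ 𝓟, u ∈ P)
    (hstar : ∀ P₁ ∈ 𝓟, ∀ P₂ ∈ 𝓟, P₁ ≠ P₂ → P₁ ∩ P₂ = {u})
    (Q' : Finset V → Finset V)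
    (hQ : ∀ P ∈ 𝓟, (Q' P).card ≤ s ∧ Disjoint (Q' P) P) :
    ∃ 𝓟' ⊆ 𝓟, (𝓟.card : ℝ) / (2 * (s : ℝ) + 1) ≤ (𝓟'.card : ℝ) ∧
      Disjoint (𝓟'.biUnion Q') (𝓟'.biUnion id) := by
  have hdeg : ∀ P ∈ 𝓟, #{P₂ ∈ 𝓟 | ¬Disjoint (Q' P) P₂} ≤ s := by
    intro P hP
    have hkernel : Disjoint (Q' P) {u} :=
      disjoint_singleton_right.mpr fun h => disjoint_left.mp (hQ P hP).2 h (hu P hP)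
    exact (card_filter_not_disjoint_le_s13 (fun P₁ h₁ P₂ h₂ hne => (hstar P₁ h₁ P₂ h₂ hne).le)
      hkernel).trans (hQ P hP).1
  obtain ⟨𝓟', h𝓟', hcard, hindep⟩ :=
    exists_pairwise_not_rel_card_le_of_outdegree_le (fun P₁ P₂ => ¬Disjoint (Q' P₁) P₂) 𝓟 hdeg
  refine ⟨𝓟', h𝓟', ?_, ?_⟩
  · rw [div_le_iff₀ (by positivity)]
    exact_mod_cast hcard
  · simp only [disjoint_biUnion_left, disjoint_biUnion_right, id]
    intro P₂ hP₂ P hP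
    by_cases h : P = P₂
    · exact h ▸ (hQ P (h𝓟' hP)).2
    · exact not_not.mp (hindep hP hP₂ h)

/-- Claim 5.1: if `𝓟` is a star with kernel `{u}` and each `P ∈ 𝓟` is assigned a set
`Q' P` of size at most `s` disjoint from `P`, then some subfamily `𝓟' ⊆ 𝓟` with
`|𝓟'| ≥ |𝓟| / (2s + 1)` is separable: `(⋃_{P ∈ 𝓟'} Q' P) ∩ (⋃ 𝓟') = ∅`. -/
theorem separable_subfamily {V : Type*} [Fintype V] [DecidableEq V]
    (s : ℕ) (hs : 0 < s) (u : V)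
    (𝓟 : Finset (Finset V)) (hu : ∀ P ∈ 𝓟, u ∈ P)
    (hstar : ∀ P₁ ∈ 𝓟, ∀ P₂ ∈ 𝓟, P₁ ≠ P₂ → P₁ ∩ P₂ = {u})
    (Q' : Finset V → Finset V)
    (hQ : ∀ P ∈ 𝓟, (Q' P).card ≤ s ∧ Disjoint (Q' P) P) :
    ∃ 𝓟' ⊆ 𝓟, (𝓟.card : ℝ) / (2 * (s : ℝ) + 1) ≤ (𝓟'.card : ℝ) ∧
      Disjoint (𝓟'.biUnion Q') (𝓟'.biUnion id) :=
  separable_subfamily_general s u 𝓟 hu hstar Q' hQ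
end

section
/- For a real number x and a positive integer k, define C(x,k) = x(x−1)⋯(x−k+1)/k! if x ≥ k − 1, and C(x,k) = 0 otherwise. Let r ≥ 3 and s ≥ 2 be integers, C, C_0 > 0 reals, and set b = 3·(r−1)!·(C + C_0). Suppose n ≥ r² and n ≥ s, and let x_1 ≥ x_2 ≥ ⋯ ≥ x_n be real numbers with r − 2 ≤ x_i ≤ n for all i, satisfying Σ_{i=1}^n C(x_i, r−1) ≥ (s−1)·C(n, r−1) − (C + C_0)·n^{r−2} and Σ_{i=1}^n C(x_i, r−2) ≤ (s−1)·C(n, r−2). Then x_i > n − b for every 1 ≤ i ≤ s − 1. -/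
/-- The generalized binomial coefficient `C(x, k) = x(x-1)⋯(x-k+1)/k!` for real `x ≥ k - 1`,
and `0` for `x < k - 1`. -/
noncomputable def genBinom (x : ℝ) (k : ℕ) : ℝ :=
  if (k : ℝ) - 1 ≤ x then (∏ i ∈ Finset.range k, (x - (i : ℝ))) / (Nat.factorial k : ℝ) else 0

/-!
Write `k = r - 2` and use `(k + 1) C(x, k + 1) = (x - k) C(x, k)`. If `x_j ≤ n - b` for some
`j ≤ s - 2`, every term with `i ≥ j` has `x_i - k ≤ x_j - k`, and each of the `j` earlier terms
exceeds this by at most `(n - x_j) C(n, k)`. With `∑ C(x_i, k) ≤ (s - 1) C(n, k)` this gives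
`(k + 1) ∑ C(x_i, k + 1) ≤ (s - 1)(k + 1) C(n, k + 1) - (n - x_j) C(n, k)`, and comparing with the
lower bound on that sum yields `b C(n, k) ≤ (k + 1)(C + C₀) n^k`, i.e. `3 k! C(n, k) ≤ n^k`.
But `k! C(n, k) = n(n - 1)⋯(n - k + 1) ≥ n^k / 2` as soon as `n ≥ k²`.
-/

open Finset

theorem genBinom_of_le {x : ℝ} {k : ℕ} (h : (k : ℝ) - 1 ≤ x) :
    genBinom x k = (∏ i ∈ range k, (x - i)) / k.factorial :=
  if_pos h

theorem sub_natCast_nonneg_of_mem_range {x : ℝ} {k i : ℕ} (h : (k : ℝ) - 1 ≤ x)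
    (hi : i ∈ range k) : 0 ≤ x - i := by
  have : (i : ℝ) + 1 ≤ k := by exact_mod_cast mem_range.1 hi
  linarith

theorem genBinom_nonneg (x : ℝ) (k : ℕ) : 0 ≤ genBinom x k := by
  unfold genBinom
  split_ifs with h
  · exact div_nonneg (prod_nonneg fun _ ↦ sub_natCast_nonneg_of_mem_range h) (by positivity)
  · exact le_rfl

theorem genBinom_mono (k : ℕ) : Monotone (genBinom · k) := by
  intro x y hxy
  show genBinom x k ≤ genBinom y k
  by_cases hx : (k : ℝ) - 1 ≤ x
  · rw [genBinom_of_le hx, genBinom_of_le (hx.trans hxy)]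
    gcongr
    exact fun _ ↦ sub_natCast_nonneg_of_mem_range hx
  · simp only [genBinom, if_neg hx]
    exact genBinom_nonneg y k

theorem genBinom_succ_right_eq {x : ℝ} {k : ℕ} (h : (k : ℝ) ≤ x) :
    genBinom x (k + 1) * (k + 1) = genBinom x k * (x - k) := by
  rw [genBinom_of_le (by push_cast; linarith), genBinom_of_le (by linarith),
    prod_range_succ, Nat.factorial_succ]
  push_cast
  field_simp

/-- The Weierstrass product inequality `∏ (1 - i / N) ≥ 1 - ∑ i / N`, cleared of denominators. -/
theorem pow_succ_le_mul_prod_range_sub_add {N : ℝ} {k : ℕ} (hN : (k : ℝ) - 1 ≤ N) :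
    N ^ (k + 1) ≤ N * ∏ i ∈ range k, (N - i) + k.choose 2 * N ^ k := by
  induction k with
  | zero => simp
  | succ k ih =>
    push_cast at hN
    have hk : 0 ≤ N - k := by linarith
    have hN0 : 0 ≤ N := by linarith [(Nat.cast_nonneg k : (0 : ℝ) ≤ k)]
    have ih := mul_le_mul_of_nonneg_right (ih (by linarith)) hk
    rw [pow_succ] at ih
    rw [prod_range_succ, Nat.choose_succ_succ', Nat.choose_one_right, pow_succ, pow_succ]
    push_cast
    have : 0 ≤ (k.choose 2 : ℝ) * N ^ k * k := by positivity
    nlinarith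

theorem pow_le_two_mul_factorial_mul_genBinom {N : ℝ} {k : ℕ} (hN : 0 < N)
    (hk : (k : ℝ) ^ 2 ≤ N) : N ^ k ≤ 2 * k.factorial * genBinom N k := by
  have hkN : (k : ℝ) - 1 ≤ N := by nlinarith
  have hchoose : (k.choose 2 : ℝ) * N ^ k ≤ N ^ (k + 1) / 2 := by
    have := Nat.choose_le_pow_div (α := ℝ) 2 k
    rw [Nat.factorial_two, Nat.cast_two] at this
    calc (k.choose 2 : ℝ) * N ^ k ≤ N / 2 * N ^ k := by gcongr; linarith
      _ = N ^ (k + 1) / 2 := by ring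
  have key := pow_succ_le_mul_prod_range_sub_add hkN
  have hfact : 2 * (k.factorial : ℝ) * genBinom N k = 2 * ∏ i ∈ range k, (N - i) := by
    rw [genBinom_of_le hkN]
    field_simp
  rw [hfact]
  rw [pow_succ'] at key hchoose
  nlinarith

theorem sum_genBinom_succ_mul_add_le {n k : ℕ} {N m : ℝ} {x : Fin n → ℝ} (hx : Antitone x)
    (hlb : ∀ i, (k : ℝ) ≤ x i) (hub : ∀ i, x i ≤ N)
    (hsum : ∑ i, genBinom (x i) k ≤ m * genBinom N k) (j : Fin n) (hj : (j : ℝ) + 1 ≤ m) :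
    (∑ i, genBinom (x i) (k + 1)) * (k + 1) + (N - x j) * genBinom N k ≤
      m * (genBinom N (k + 1) * (k + 1)) := by
  have hxj : 0 ≤ x j - k := sub_nonneg.2 (hlb j)
  have hgap_nonneg : 0 ≤ (N - x j) * genBinom N k :=
    mul_nonneg (sub_nonneg.2 (hub j)) (genBinom_nonneg N k)
  have hterm (i : Fin n) : genBinom (x i) (k + 1) * (k + 1) ≤
      genBinom (x i) k * (x j - k) + if i < j then (N - x j) * genBinom N k else 0 := by
    rw [genBinom_succ_right_eq (hlb i)]
    have hG := genBinom_nonneg (x i) k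
    split_ifs with hij
    · calc genBinom (x i) k * (x i - k)
          = genBinom (x i) k * (x j - k) + (x i - x j) * genBinom (x i) k := by ring
        _ ≤ genBinom (x i) k * (x j - k) + (N - x j) * genBinom N k := by
          gcongr
          · linarith [hub j]
          · exact hub i
          · exact genBinom_mono k (hub i)
    · rw [add_zero]
      exact mul_le_mul_of_nonneg_left (by linarith [hx (not_lt.1 hij)]) hG
  have hcount : ∑ i, (if i < j then (N - x j) * genBinom N k else 0) =
      j * ((N - x j) * genBinom N k) := by
    rw [← sum_filter, sum_const, nsmul_eq_mul, filter_gt_eq_Iio, Fin.card_Iio]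
  have hsum_succ : (∑ i, genBinom (x i) (k + 1)) * (k + 1) ≤
      (∑ i, genBinom (x i) k) * (x j - k) + j * ((N - x j) * genBinom N k) := by
    rw [sum_mul, ← hcount, sum_mul, ← sum_add_distrib]
    exact sum_le_sum fun i _ ↦ hterm i
  have hsum_le : (∑ i, genBinom (x i) k) * (x j - k) + j * ((N - x j) * genBinom N k) ≤
      m * genBinom N k * (x j - k) + (m - 1) * ((N - x j) * genBinom N k) := by
    gcongr
    linarith
  rw [genBinom_succ_right_eq ((hlb j).trans (hub j))]
  linarith

theorem college_algebra_general (r s n : ℕ) (hr : 3 ≤ r)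
    (C C0 : ℝ) (hC : 0 < C) (hC0 : 0 < C0)
    (b : ℝ) (hb : b = 3 * (Nat.factorial (r - 1) : ℝ) * (C + C0))
    (hn : r ^ 2 ≤ n)
    (x : Fin n → ℝ) (hmono : ∀ i j : Fin n, i ≤ j → x j ≤ x i)
    (hlb : ∀ i, (r : ℝ) - 2 ≤ x i) (hub : ∀ i, x i ≤ (n : ℝ))
    (hsum1 : ((s : ℝ) - 1) * genBinom (n : ℝ) (r - 1) - (C + C0) * (n : ℝ) ^ (r - 2) ≤
      ∑ i, genBinom (x i) (r - 1))
    (hsum2 : ∑ i, genBinom (x i) (r - 2) ≤ ((s : ℝ) - 1) * genBinom (n : ℝ) (r - 2)) :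
    ∀ i : Fin n, (i : ℕ) < s - 1 → (n : ℝ) - b < x i := by
  intro j hj
  by_contra! hxj
  obtain ⟨k, rfl⟩ : ∃ k, r = k + 2 := ⟨r - 2, by omega⟩
  simp only [show k + 2 - 1 = k + 1 by omega, Nat.add_sub_cancel] at hsum1 hsum2 hb
  have hjs : (j : ℝ) + 1 ≤ s - 1 := by
    have : ((j : ℕ) : ℝ) + 2 ≤ s := by exact_mod_cast (by omega : (j : ℕ) + 2 ≤ s)
    linarith
  have hstab := sum_genBinom_succ_mul_add_le (fun _ _ h ↦ hmono _ _ h)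
    (fun i ↦ by linarith [hlb i, (by push_cast; ring : ((k + 2 : ℕ) : ℝ) - 2 = k)]) hub hsum2 j hjs
  have hk1 : (0 : ℝ) < k + 1 := by positivity
  have hgap : b * genBinom n k ≤ (k + 1) * ((C + C0) * n ^ k) := by
    have hbG := mul_le_mul_of_nonneg_right (show b ≤ n - x j by linarith) (genBinom_nonneg n k)
    have := mul_le_mul_of_nonneg_right hsum1 hk1.le
    linarith
  have hthree : 3 * k.factorial * genBinom n k ≤ n ^ k := by
    rw [hb, Nat.factorial_succ, Nat.cast_mul] at hgap
    refine le_of_mul_le_mul_left ?_ (mul_pos hk1 (add_pos hC hC0))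
    push_cast at hgap
    linarith
  have hn0 : (0 : ℝ) < n := by exact_mod_cast (by positivity : 0 < (k + 2) ^ 2).trans_le hn
  have htwo := pow_le_two_mul_factorial_mul_genBinom hn0
    (by exact_mod_cast (Nat.pow_le_pow_left (by omega) 2).trans hn : (k : ℝ) ^ 2 ≤ n)
  linarith [pow_pos hn0 k]

/-- Lemma 6.2: with `b = 3(r-1)!(C + C₀)`, `n ≥ r²`, `n ≥ s`, and
`x₁ ≥ x₂ ≥ ⋯ ≥ x_n` reals in `[r-2, n]` satisfying
`Σ C(xᵢ, r-1) ≥ (s-1)·C(n, r-1) - (C + C₀)·n^(r-2)` and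
`Σ C(xᵢ, r-2) ≤ (s-1)·C(n, r-2)`, one has `xᵢ > n - b` for all `1 ≤ i ≤ s - 1`. -/
theorem college_algebra (r s n : ℕ) (hr : 3 ≤ r) (hs : 2 ≤ s)
    (C C0 : ℝ) (hC : 0 < C) (hC0 : 0 < C0)
    (b : ℝ) (hb : b = 3 * (Nat.factorial (r - 1) : ℝ) * (C + C0))
    (hn : r ^ 2 ≤ n) (hns : s ≤ n)
    (x : Fin n → ℝ) (hmono : ∀ i j : Fin n, i ≤ j → x j ≤ x i)
    (hlb : ∀ i, (r : ℝ) - 2 ≤ x i) (hub : ∀ i, x i ≤ (n : ℝ))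
    (hsum1 : ((s : ℝ) - 1) * genBinom (n : ℝ) (r - 1) - (C + C0) * (n : ℝ) ^ (r - 2) ≤
      ∑ i, genBinom (x i) (r - 1))
    (hsum2 : ∑ i, genBinom (x i) (r - 2) ≤ ((s : ℝ) - 1) * genBinom (n : ℝ) (r - 2)) :
    ∀ i : Fin n, (i : ℕ) < s - 1 → (n : ℝ) - b < x i :=
  college_algebra_general r s n hr C C0 hC hC0 b hb hn x hmono hlb hub hsum1 hsum2
end
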